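/- arXiv:2210.10215 — 5 statements merged into one kernel-verified Lean document; each statement's English description precedes it below -/
import Mathlib

section
/- For every integer d ≥ 1 and all nonnegative integers n and W, the number of tuples x = (n_1,…,n_d) ∈ ℕ^d with n(x) = n and W(x) = W equals the number of partitions of W with at most n parts, each part of size at most d − 1. -/
namespace Spiral

/-- The size `n(x) = n₁ + ⋯ + n_d` of a configuration `x ∈ ℕ^d`. -/
def size {d : ℕ} (x : Fin d → ℕ) : ℕ := ∑ i, x i

/-- The weight `W(x) = Σ_{i<j} (max(0, x_j − x_i) + max(0, x_i − x_j − 1))`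
(truncated ℕ-subtraction realizes the `max(0,·)`). -/
def weight {d : ℕ} (x : Fin d → ℕ) : ℕ :=
  ∑ i : Fin d, ∑ j : Fin d, if i < j then (x j - x i) + (x i - x j - 1) else 0

end Spiral


namespace SpiralProof
open Spiral Finset
open scoped Classical

variable {d : ℕ}

/-- bead `i` is strictly below bead `j` (lex order on `(x i, i)`). -/
def blt (x : Fin d → ℕ) (i j : Fin d) : Prop :=
  x i < x j ∨ (x i = x j ∧ (i : ℕ) < (j : ℕ))

/-- bead `i` is more than one unit below bead `j`. -/
def bgap (x : Fin d → ℕ) (i j : Fin d) : Prop :=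
  x i + 1 < x j ∨ (x i + 1 = x j ∧ (i : ℕ) < (j : ℕ))

lemma blt_irrefl (x : Fin d → ℕ) (i : Fin d) : ¬ blt x i i := by
  unfold blt; omega

lemma bgap_irrefl (x : Fin d → ℕ) (i : Fin d) : ¬ bgap x i i := by
  unfold bgap; omega

lemma blt_trichotomy (x : Fin d → ℕ) (i j : Fin d) (h : i ≠ j) : blt x i j ∨ blt x j i := by
  have hv : (i : ℕ) ≠ (j : ℕ) := fun hv => h (Fin.ext hv)
  unfold blt; omega

lemma blt_asymm (x : Fin d → ℕ) (i j : Fin d) : blt x i j → ¬ blt x j i := by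
  unfold blt; omega

lemma bgap_blt (x : Fin d → ℕ) {i j : Fin d} (h : bgap x i j) : blt x i j := by
  unfold bgap blt at *; omega

/-- the rank of a bead: the number of beads strictly below it. -/
noncomputable def rank (x : Fin d → ℕ) (i : Fin d) : ℕ :=
  (univ.filter fun l => blt x l i).card

/-- the top statistic: number of beads more than one unit below some bead. -/
noncomputable def top (x : Fin d → ℕ) : ℕ :=
  (univ.filter fun l => ∃ m, bgap x l m).card

lemma rank_lt (x : Fin d → ℕ) (hd : 0 < d) (i : Fin d) : rank x i < d := by
  have h1 : (univ.filter fun l => blt x l i) ⊆ univ.erase i := by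
    intro l hl
    simp only [mem_filter, mem_univ, true_and] at hl
    exact Finset.mem_erase.2 ⟨fun h => blt_irrefl x i (h ▸ hl), mem_univ _⟩
  have h2 : rank x i ≤ (univ.erase i).card := Finset.card_le_card h1
  rwa [Finset.card_erase_of_mem (mem_univ _), Finset.card_univ, Fintype.card_fin,
    Nat.le_sub_one_iff_lt hd] at h2

lemma rank_lt_rank (x : Fin d → ℕ) {a b : Fin d} (hab : blt x a b) : rank x a < rank x b := by
  have hsub : insert a (univ.filter fun l => blt x l a) ⊆ (univ.filter fun l => blt x l b) := by
    intro l hl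
    rcases Finset.mem_insert.1 hl with rfl | hl
    · simp only [mem_filter, mem_univ, true_and]; exact hab
    · simp only [mem_filter, mem_univ, true_and] at hl ⊢
      unfold blt at *; omega
  have hna : a ∉ (univ.filter fun l => blt x l a) := by
    simp only [mem_filter, mem_univ, true_and]; exact blt_irrefl x a
  have h1 : (insert a (univ.filter fun l => blt x l a)).card
      = (univ.filter fun l => blt x l a).card + 1 := Finset.card_insert_of_notMem hna
  have h2 := Finset.card_le_card hsub
  have e1 : rank x a = (univ.filter fun l => blt x l a).card := rfl
  have e2 : rank x b = (univ.filter fun l => blt x l b).card := rfl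
  omega

lemma rank_injective (x : Fin d → ℕ) : Function.Injective (rank x) := by
  intro i j hij
  by_contra hne
  rcases blt_trichotomy x i j hne with h | h
  · exact absurd hij (Nat.ne_of_lt (rank_lt_rank x h))
  · exact absurd hij.symm (Nat.ne_of_lt (rank_lt_rank x h))

lemma rank_surjective (x : Fin d → ℕ) (hd : 0 < d) {c : ℕ} (hc : c < d) :
    ∃ B, rank x B = c := by
  set f : Fin d → Fin d := fun i => ⟨rank x i, rank_lt x hd i⟩ with hf
  have hinj : Function.Injective f := by
    intro i j h
    exact rank_injective x (by simpa [hf, Fin.ext_iff] using h)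
  obtain ⟨B, hB⟩ := Finite.injective_iff_surjective.1 hinj ⟨c, hc⟩
  exact ⟨B, by simpa [hf, Fin.ext_iff] using hB⟩

/-- existence of a strictly maximal bead. -/
lemma exists_maxBead (x : Fin d → ℕ) (hd : 0 < d) :
    ∃ T : Fin d, ∀ l, l ≠ T → blt x l T := by
  obtain ⟨T, -, hT⟩ := Finset.exists_max_image Finset.univ
    (fun i => toLex ((x i : ℕ), i)) ⟨⟨0, hd⟩, mem_univ _⟩
  refine ⟨T, fun l hl => ?_⟩
  have := hT l (mem_univ _)
  rw [Prod.Lex.le_iff] at this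
  rcases this with h | ⟨h1, h2⟩
  · exact Or.inl h
  · exact Or.inr ⟨h1, lt_of_le_of_ne (by exact_mod_cast h2) (fun hv => hl (Fin.ext hv))⟩

end SpiralProof

namespace SpiralProof
open Spiral Finset
open scoped Classical

variable {d : ℕ}

/-- indicator of a proposition, with a fixed (classical) decidability instance. -/
noncomputable def ind (p : Prop) : ℕ := if p then 1 else 0

lemma ind_of (p : Prop) (h : p) : ind p = 1 := by simp [ind, h]
lemma ind_of_not (p : Prop) (h : ¬ p) : ind p = 0 := by simp [ind, h]
lemma ind_congr {p q : Prop} (h : p ↔ q) : ind p = ind q := by unfold ind; simp [h]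

lemma ind_eq_ite (p : Prop) [Decidable p] : ind p = if p then 1 else 0 := by
  by_cases h : p <;> simp [ind, h]

lemma card_filter_eq_sum_ind (P : Fin d → Prop) :
    (univ.filter P).card = ∑ l : Fin d, ind (P l) := by
  rw [Finset.card_filter]
  exact Finset.sum_congr rfl fun l _ => (ind_eq_ite (P l)).symm

lemma sum_sum_ind (T : Fin d) (P : Fin d → Prop) :
    (∑ i : Fin d, ∑ j : Fin d, ind (i = T ∧ P j))
      = ∑ l : Fin d, ind (P l) := by
  have h1 : ∀ i : Fin d, (∑ j : Fin d, ind (i = T ∧ P j))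
      = if i = T then (∑ l : Fin d, ind (P l)) else 0 := by
    intro i
    by_cases hi : i = T
    · rw [if_pos hi]
      exact Finset.sum_congr rfl fun j _ => ind_congr (by simp [hi])
    · rw [if_neg hi]
      rw [Finset.sum_congr rfl (fun j _ => ind_of_not (i = T ∧ P j) (fun hc => hi hc.1))]
      simp
  rw [Finset.sum_congr rfl (fun i _ => h1 i)]
  simp

lemma sum_sum_ind' (T : Fin d) (P : Fin d → Prop) :
    (∑ i : Fin d, ∑ j : Fin d, ind (j = T ∧ P i))
      = ∑ l : Fin d, ind (P l) := by
  rw [Finset.sum_comm]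
  exact sum_sum_ind T P

/-- the number of beads strictly more than one unit below the bead `T`. -/
noncomputable def cnt (x : Fin d → ℕ) (T : Fin d) : ℕ :=
  (univ.filter fun l => bgap x l T).card

lemma weight_peel (x : Fin d → ℕ) (T : Fin d) (hT : ∀ l, l ≠ T → blt x l T)
    (hxT : 1 ≤ x T) :
    weight x = weight (Function.update x T (x T - 1)) + cnt x T := by
  set x' := Function.update x T (x T - 1) with hx'
  have hupd : ∀ l, x' l = if l = T then x T - 1 else x l := by
    intro l; rw [hx', Function.update_apply]
  have key : ∀ i j : Fin d, (if i < j then (x j - x i) + (x i - x j - 1) else 0)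
      = (if i < j then (x' j - x' i) + (x' i - x' j - 1) else 0)
        + (ind (i = T ∧ (T < j ∧ bgap x j T)) + ind (j = T ∧ (i < T ∧ bgap x i T))) := by
    intro i j
    by_cases hiT : i = T
    · by_cases hjT : j = T
      · have hij : i = j := hiT.trans hjT.symm
        have hni : ¬ i < j := by rw [hij]; exact lt_irrefl j
        rw [if_neg hni, if_neg hni,
          ind_of_not (i = T ∧ (T < j ∧ bgap x j T))
            (fun hc => by rw [hjT] at hc; exact lt_irrefl T hc.2.1),
          ind_of_not (j = T ∧ (i < T ∧ bgap x i T))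
            (fun hc => by rw [hiT] at hc; exact lt_irrefl T hc.2.1)]
      · have hbj := hT j hjT
        have e1 : x' i = x i - 1 := by rw [hupd, if_pos hiT, hiT]
        have e2 : x' j = x j := by rw [hupd, if_neg hjT]
        have hA : ind (i = T ∧ (T < j ∧ bgap x j T))
            = ind ((T : ℕ) < (j : ℕ) ∧ bgap x j T) :=
          ind_congr (Iff.intro (fun h => ⟨Fin.lt_def.mp h.2.1, h.2.2⟩)
            (fun h => ⟨hiT, Fin.lt_def.mpr h.1, h.2⟩))
        have hB : ind (j = T ∧ (i < T ∧ bgap x i T)) = 0 :=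
          ind_of_not (j = T ∧ (i < T ∧ bgap x i T)) (fun hc => hjT hc.1)
        rw [e1, e2, hA, hB]
        have hxi : x i = x T := by rw [hiT]
        have hvi : (i : ℕ) = (T : ℕ) := by rw [hiT]
        have hjne : (j : ℕ) ≠ (T : ℕ) := fun hc => hjT (Fin.ext hc)
        unfold blt at hbj
        unfold bgap at *
        unfold ind
        simp only [Fin.lt_def]
        split_ifs <;> omega
    · by_cases hjT : j = T
      · have hbi := hT i hiT
        have e1 : x' j = x j - 1 := by rw [hupd, if_pos hjT, hjT]
        have e2 : x' i = x i := by rw [hupd, if_neg hiT]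
        have hA : ind (i = T ∧ (T < j ∧ bgap x j T)) = 0 :=
          ind_of_not (i = T ∧ (T < j ∧ bgap x j T)) (fun hc => hiT hc.1)
        have hB : ind (j = T ∧ (i < T ∧ bgap x i T))
            = ind ((i : ℕ) < (T : ℕ) ∧ bgap x i T) :=
          ind_congr (Iff.intro (fun h => ⟨Fin.lt_def.mp h.2.1, h.2.2⟩)
            (fun h => ⟨hjT, Fin.lt_def.mpr h.1, h.2⟩))
        rw [e1, e2, hA, hB]
        have hxj : x j = x T := by rw [hjT]
        have hvj : (j : ℕ) = (T : ℕ) := by rw [hjT]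
        have hine : (i : ℕ) ≠ (T : ℕ) := fun hc => hiT (Fin.ext hc)
        unfold blt at hbi
        unfold bgap at *
        unfold ind
        simp only [Fin.lt_def]
        split_ifs <;> omega
      · have e1 : x' i = x i := by rw [hupd, if_neg hiT]
        have e2 : x' j = x j := by rw [hupd, if_neg hjT]
        have hA : ind (i = T ∧ (T < j ∧ bgap x j T)) = 0 :=
          ind_of_not (i = T ∧ (T < j ∧ bgap x j T)) (fun hc => hiT hc.1)
        have hB : ind (j = T ∧ (i < T ∧ bgap x i T)) = 0 :=
          ind_of_not (j = T ∧ (i < T ∧ bgap x i T)) (fun hc => hjT hc.1)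
        rw [e1, e2, hA, hB]
        simp
  have hw : weight x = weight x'
      + ((∑ i : Fin d, ∑ j : Fin d, ind (i = T ∧ (T < j ∧ bgap x j T)))
        + (∑ i : Fin d, ∑ j : Fin d, ind (j = T ∧ (i < T ∧ bgap x i T)))) := by
    unfold weight
    simp only [← Finset.sum_add_distrib]
    exact Finset.sum_congr rfl fun i _ => Finset.sum_congr rfl fun j _ => key i j
  have h1 := sum_sum_ind T (fun j => (T : ℕ) < (j : ℕ) ∧ bgap x j T)
  have h2 := sum_sum_ind' T (fun i => (i : ℕ) < (T : ℕ) ∧ bgap x i T)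
  have hkey2 : ∀ l : Fin d, ind ((T : ℕ) < (l : ℕ) ∧ bgap x l T)
      + ind ((l : ℕ) < (T : ℕ) ∧ bgap x l T) = ind (bgap x l T) := by
    intro l
    by_cases hb : bgap x l T
    · have hlT : (l : ℕ) ≠ (T : ℕ) := by
        intro hc
        exact bgap_irrefl x T ((Fin.ext hc : l = T) ▸ hb)
      rcases Nat.lt_or_ge (l : ℕ) (T : ℕ) with h | h
      · rw [ind_of_not ((T : ℕ) < (l : ℕ) ∧ bgap x l T) (fun hc => by omega),
          ind_of ((l : ℕ) < (T : ℕ) ∧ bgap x l T) ⟨h, hb⟩, ind_of _ hb]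
      · have h' : (T : ℕ) < (l : ℕ) := by omega
        rw [ind_of ((T : ℕ) < (l : ℕ) ∧ bgap x l T) ⟨h', hb⟩,
          ind_of_not ((l : ℕ) < (T : ℕ) ∧ bgap x l T) (fun hc => by omega), ind_of _ hb]
    · rw [ind_of_not ((T : ℕ) < (l : ℕ) ∧ bgap x l T) (fun hc => hb hc.2),
        ind_of_not ((l : ℕ) < (T : ℕ) ∧ bgap x l T) (fun hc => hb hc.2),
        ind_of_not _ hb]
  have hcnt : cnt x T = ∑ l : Fin d, ind (bgap x l T) :=
    card_filter_eq_sum_ind (fun l => bgap x l T)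
  have hw2 : weight x = weight x' + cnt x T := by
    rw [hw]
    have hA : (∑ i : Fin d, ∑ j : Fin d, ind (i = T ∧ ((T : ℕ) < (j : ℕ) ∧ bgap x j T)))
        = ∑ i : Fin d, ∑ j : Fin d, ind (i = T ∧ (T < j ∧ bgap x j T)) := by
      refine Finset.sum_congr rfl fun i _ => Finset.sum_congr rfl fun j _ =>
        ind_congr (and_congr_right fun _ => and_congr_left fun _ => (Fin.lt_def).symm)
    have hB : (∑ i : Fin d, ∑ j : Fin d, ind (j = T ∧ ((i : ℕ) < (T : ℕ) ∧ bgap x i T)))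
        = ∑ i : Fin d, ∑ j : Fin d, ind (j = T ∧ (i < T ∧ bgap x i T)) := by
      refine Finset.sum_congr rfl fun i _ => Finset.sum_congr rfl fun j _ =>
        ind_congr (and_congr_right fun _ => and_congr_left fun _ => (Fin.lt_def).symm)
    rw [← hA, ← hB, h1, h2, hcnt, ← Finset.sum_add_distrib]
    rw [Finset.sum_congr rfl (fun l _ => hkey2 l)]
  exact hw2

end SpiralProof
namespace SpiralProof
open Spiral Finset
open scoped Classical

variable {d : ℕ}

lemma val_ne_of_ne {i j : Fin d} (h : i ≠ j) : (i : ℕ) ≠ (j : ℕ) :=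
  fun hc => h (Fin.ext hc)

/-- when `T` is the strict max, `top` equals `cnt · T`. -/
lemma top_eq_cnt (x : Fin d → ℕ) (T : Fin d) (hT : ∀ l, l ≠ T → blt x l T) :
    top x = cnt x T := by
  unfold top cnt
  congr 1
  apply Finset.filter_congr
  intro l _
  constructor
  · rintro ⟨m, hm⟩
    by_cases hmT : m = T
    · rwa [hmT] at hm
    · have := hT m hmT
      unfold bgap blt at *
      omega
  · intro h; exact ⟨T, h⟩

lemma cnt_lt (x : Fin d → ℕ) (T : Fin d) (hd : 0 < d) : cnt x T < d := by
  have h1 : (univ.filter fun l => bgap x l T) ⊆ univ.erase T := by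
    intro l hl
    simp only [mem_filter, mem_univ, true_and] at hl
    exact Finset.mem_erase.2 ⟨fun h => bgap_irrefl x T (h ▸ hl), mem_univ _⟩
  have h2 : cnt x T ≤ (univ.erase T).card := Finset.card_le_card h1
  rwa [Finset.card_erase_of_mem (mem_univ _), Finset.card_univ, Fintype.card_fin,
    Nat.le_sub_one_iff_lt hd] at h2

lemma top_peel_le (x : Fin d → ℕ) (T : Fin d) (hT : ∀ l, l ≠ T → blt x l T)
    (hxT : 1 ≤ x T) :
    top (Function.update x T (x T - 1)) ≤ cnt x T := by
  set x' := Function.update x T (x T - 1) with hx'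
  have hupd : ∀ l, x' l = if l = T then x T - 1 else x l := by
    intro l; rw [hx', Function.update_apply]
  unfold top cnt
  apply Finset.card_le_card
  intro l hl
  simp only [mem_filter, mem_univ, true_and] at hl ⊢
  obtain ⟨m, hm⟩ := hl
  have hmne : m ≠ l := fun h => bgap_irrefl x' l (h ▸ hm)
  by_cases hlT : l = T
  · exfalso
    have hmT : m ≠ T := by rw [hlT] at hmne; exact hmne
    have hb := hT m hmT
    have e1 : x' l = x T - 1 := by rw [hupd, if_pos hlT]
    have e2 : x' m = x m := by rw [hupd, if_neg hmT]
    rw [hlT] at hm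
    have e1' : x' T = x T - 1 := by rw [hupd, if_pos rfl]
    unfold bgap blt at *
    rw [e1', e2] at hm
    omega
  · have e0 : x' l = x l := by rw [hupd, if_neg hlT]
    by_cases hmT : m = T
    · have e1 : x' m = x T - 1 := by rw [hupd, if_pos hmT]
      rw [hmT] at hm
      have e1' : x' T = x T - 1 := by rw [hupd, if_pos rfl]
      unfold bgap at *
      rw [e1', e0] at hm
      have : (l : ℕ) ≠ (T : ℕ) := val_ne_of_ne hlT
      omega
    · have hb := hT m hmT
      have e1 : x' m = x m := by rw [hupd, if_neg hmT]
      unfold bgap blt at *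
      rw [e0, e1] at hm
      omega

lemma rank_peel (x : Fin d → ℕ) (T : Fin d) (hxT : 1 ≤ x T) :
    rank (Function.update x T (x T - 1)) T = cnt x T := by
  set x' := Function.update x T (x T - 1) with hx'
  have hupd : ∀ l, x' l = if l = T then x T - 1 else x l := by
    intro l; rw [hx', Function.update_apply]
  unfold rank cnt
  congr 1
  apply Finset.filter_congr
  intro l _
  by_cases hlT : l = T
  · rw [hlT]
    simp only [blt_irrefl, bgap_irrefl]
  · have e0 : x' l = x l := by rw [hupd, if_neg hlT]
    have e1 : x' T = x T - 1 := by rw [hupd, if_pos rfl]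
    unfold blt bgap
    rw [e0, e1]
    constructor <;> intro h <;> omega

/-- bumping the bead of rank `c` in a configuration with `top ≤ c` makes it the strict max. -/
lemma bump_max (x' : Fin d → ℕ) (B : Fin d) (hval : top x' ≤ rank x' B) :
    ∀ l, l ≠ B → blt (Function.update x' B (x' B + 1)) l B := by
  set y := Function.update x' B (x' B + 1) with hy
  have hupd : ∀ l, y l = if l = B then x' B + 1 else x' l := by
    intro l; rw [hy, Function.update_apply]
  intro l hl
  have e0 : y l = x' l := by rw [hupd, if_neg hl]
  have e1 : y B = x' B + 1 := by rw [hupd, if_pos rfl]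
  unfold blt
  rw [e0, e1]
  by_contra hcon
  push_neg at hcon
  have hgap : bgap x' B l := by
    have hvne : (l : ℕ) ≠ (B : ℕ) := val_ne_of_ne hl
    unfold bgap
    omega
  have hsub : (univ.filter fun k => blt x' k B ∨ k = B)
      ⊆ (univ.filter fun k => ∃ m, bgap x' k m) := by
    intro k hk
    simp only [mem_filter, mem_univ, true_and] at hk ⊢
    rcases hk with hk | rfl
    · refine ⟨l, ?_⟩
      unfold blt bgap at *
      omega
    · exact ⟨l, hgap⟩
  have hcard := Finset.card_le_card hsub
  have hsplit : (univ.filter fun k => blt x' k B ∨ k = B)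
      = (univ.filter fun k => blt x' k B) ∪ (univ.filter fun k => k = B) := by
    rw [← Finset.filter_or]
  have hdisj : Disjoint (univ.filter fun k => blt x' k B) (univ.filter fun k => k = B) := by
    rw [Finset.disjoint_filter]
    rintro k - hk rfl
    exact blt_irrefl x' k hk
  have hBcard : (univ.filter fun k => k = B).card = 1 := by
    rw [Finset.filter_eq' univ B, if_pos (mem_univ _)]
    simp
  rw [hsplit, Finset.card_union_of_disjoint hdisj, hBcard] at hcard
  have : rank x' B + 1 ≤ top x' := hcard
  omega

lemma bump_unbump (x' : Fin d → ℕ) (B : Fin d) :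
    Function.update (Function.update x' B (x' B + 1)) B
      ((Function.update x' B (x' B + 1)) B - 1) = x' := by
  funext l
  by_cases hl : l = B
  · rw [hl]
    simp [Function.update_self]
  · simp [Function.update_apply, hl]

lemma cnt_bump (x' : Fin d → ℕ) (B : Fin d) :
    cnt (Function.update x' B (x' B + 1)) B = rank x' B := by
  set y := Function.update x' B (x' B + 1) with hy
  have hupd : ∀ l, y l = if l = B then x' B + 1 else x' l := by
    intro l; rw [hy, Function.update_apply]
  unfold cnt rank
  congr 1
  apply Finset.filter_congr
  intro l _
  by_cases hl : l = B
  · rw [hl]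
    simp only [bgap_irrefl, blt_irrefl]
  · have e0 : y l = x' l := by rw [hupd, if_neg hl]
    have e1 : y B = x' B + 1 := by rw [hupd, if_pos rfl]
    unfold bgap blt
    rw [e0, e1]
    constructor <;> intro h <;> omega

lemma size_update_sub (x : Fin d → ℕ) (T : Fin d) (hxT : 1 ≤ x T) :
    size (Function.update x T (x T - 1)) + 1 = size x := by
  unfold size
  rw [Finset.sum_update_of_mem (mem_univ _)]
  have h1 : ∑ i, x i = ∑ i ∈ univ \ {T}, x i + x T :=
    Finset.sum_eq_sum_sdiff_singleton_add (mem_univ T) x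
  omega

lemma size_update_add (x : Fin d → ℕ) (T : Fin d) :
    size (Function.update x T (x T + 1)) = size x + 1 := by
  unfold size
  rw [Finset.sum_update_of_mem (mem_univ _)]
  have h1 : ∑ i, x i = ∑ i ∈ univ \ {T}, x i + x T :=
    Finset.sum_eq_sum_sdiff_singleton_add (mem_univ T) x
  omega

lemma le_size (x : Fin d → ℕ) (i : Fin d) : x i ≤ size x :=
  Finset.single_le_sum (fun _ _ => Nat.zero_le _) (mem_univ i)

lemma size_pos_bead (x : Fin d → ℕ) (T : Fin d) (hT : ∀ l, l ≠ T → blt x l T)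
    (hs : 1 ≤ size x) : 1 ≤ x T := by
  by_contra h
  push_neg at h
  interval_cases hxT : x T
  have : ∀ i : Fin d, x i = 0 := by
    intro i
    by_cases hi : i = T
    · rw [hi]; exact hxT
    · have := hT i hi
      unfold blt at this
      omega
  have : size x = 0 := by
    unfold size
    exact Finset.sum_eq_zero fun i _ => this i
  omega

end SpiralProof
namespace SpiralProof
open Spiral Finset
open scoped Classical

variable {d : ℕ}

noncomputable def maxBead (hd : 0 < d) (x : Fin d → ℕ) : Fin d :=
  (exists_maxBead x hd).choose

lemma maxBead_spec (hd : 0 < d) (x : Fin d → ℕ) :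
    ∀ l, l ≠ maxBead hd x → blt x l (maxBead hd x) :=
  (exists_maxBead x hd).choose_spec

lemma maxBead_unique (hd : 0 < d) (x : Fin d → ℕ) (T : Fin d)
    (hT : ∀ l, l ≠ T → blt x l T) : maxBead hd x = T := by
  by_contra h
  exact blt_asymm x _ _ (maxBead_spec hd x T (fun hc => h hc.symm)) (hT _ h)

noncomputable def invRank (hd : 0 < d) (x : Fin d → ℕ) (c : ℕ) : Fin d :=
  if h : ∃ B, rank x B = c then h.choose else ⟨0, hd⟩

lemma invRank_spec (hd : 0 < d) (x : Fin d → ℕ) {c : ℕ} (hc : c < d) :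
    rank x (invRank hd x c) = c := by
  have h : ∃ B, rank x B = c := rank_surjective x hd hc
  rw [invRank, dif_pos h]
  exact h.choose_spec

/-- peel one unit off the maximal bead. -/
noncomputable def peelMap (hd : 0 < d) (x : Fin d → ℕ) : Fin d → ℕ :=
  Function.update x (maxBead hd x) (x (maxBead hd x) - 1)

/-- add one unit to the bead of rank `c`. -/
noncomputable def bumpMap (hd : 0 < d) (x' : Fin d → ℕ) (c : ℕ) : Fin d → ℕ :=
  Function.update x' (invRank hd x' c) (x' (invRank hd x' c) + 1)

lemma peel_spec (hd : 0 < d) (x : Fin d → ℕ) (hs : 1 ≤ size x) :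
    size (peelMap hd x) + 1 = size x
      ∧ weight x = weight (peelMap hd x) + top x
      ∧ top (peelMap hd x) ≤ top x
      ∧ top x < d
      ∧ bumpMap hd (peelMap hd x) (top x) = x := by
  set T := maxBead hd x with hTdef
  have hT : ∀ l, l ≠ T → blt x l T := maxBead_spec hd x
  have hxT : 1 ≤ x T := size_pos_bead x T hT hs
  have htc : top x = cnt x T := top_eq_cnt x T hT
  have hpm : peelMap hd x = Function.update x T (x T - 1) := rfl
  refine ⟨by rw [hpm]; exact size_update_sub x T hxT, ?_, ?_, ?_, ?_⟩
  · rw [htc, hpm]; exact weight_peel x T hT hxT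
  · rw [htc, hpm]; exact top_peel_le x T hT hxT
  · rw [htc]; exact cnt_lt x T hd
  · have hrk : rank (peelMap hd x) T = cnt x T := by rw [hpm]; exact rank_peel x T hxT
    have hBT : invRank hd (peelMap hd x) (top x) = T := by
      apply rank_injective
      rw [invRank_spec hd _ (by rw [htc]; exact cnt_lt x T hd), hrk, htc]
    show Function.update (peelMap hd x) (invRank hd (peelMap hd x) (top x))
      ((peelMap hd x) (invRank hd (peelMap hd x) (top x)) + 1) = x
    rw [hBT, hpm]
    funext l
    by_cases hl : l = T
    · rw [hl]
      simp only [Function.update_self]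
      omega
    · simp only [Function.update_apply, if_neg hl]

lemma bump_spec (hd : 0 < d) (x' : Fin d → ℕ) (c : ℕ) (hc : c < d) (hval : top x' ≤ c) :
    size (bumpMap hd x' c) = size x' + 1
      ∧ weight (bumpMap hd x' c) = weight x' + c
      ∧ top (bumpMap hd x' c) = c
      ∧ peelMap hd (bumpMap hd x' c) = x' := by
  set B := invRank hd x' c with hBdef
  have hB : rank x' B = c := invRank_spec hd x' hc
  have hval' : top x' ≤ rank x' B := by rw [hB]; exact hval
  have hmax := bump_max x' B hval'
  have hbm : bumpMap hd x' c = Function.update x' B (x' B + 1) := rfl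
  have hyB : 1 ≤ (Function.update x' B (x' B + 1)) B := by
    rw [Function.update_self]; omega
  have h1 := weight_peel (Function.update x' B (x' B + 1)) B hmax hyB
  rw [bump_unbump x' B, cnt_bump x' B, hB] at h1
  have hty : top (Function.update x' B (x' B + 1)) = c := by
    rw [top_eq_cnt _ B hmax, cnt_bump x' B, hB]
  have hTy : maxBead hd (Function.update x' B (x' B + 1)) = B :=
    maxBead_unique hd _ B hmax
  refine ⟨by rw [hbm]; exact size_update_add x' B, by rw [hbm]; omega,
    by rw [hbm]; exact hty, ?_⟩
  show Function.update (bumpMap hd x' c) (maxBead hd (bumpMap hd x' c))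
    ((bumpMap hd x' c) (maxBead hd (bumpMap hd x' c)) - 1) = x'
  rw [hbm, hTy]
  exact bump_unbump x' B

lemma sigma_sub_ext {ι γ : Type*} {Q : ι → γ → Prop} {a b : Σ i : ι, {z : γ // Q i z}}
    (h1 : a.fst = b.fst) (h2 : (a.snd : γ) = (b.snd : γ)) : a = b := by
  rcases a with ⟨a1, a2⟩
  rcases b with ⟨b1, b2⟩
  dsimp at h1
  subst h1
  dsimp at h2
  rw [Subtype.ext h2]

/-- the peeling step bijection, as an equivalence of subtypes. -/
noncomputable def stepEquiv (hd : 0 < d) (n W b : ℕ) :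
    {x : Fin d → ℕ // size x = n + 1 ∧ weight x = W ∧ top x ≤ b} ≃
      (Σ c : Fin d, {x' : Fin d → ℕ //
        (size x' = n ∧ weight x' = W - (c : ℕ) ∧ top x' ≤ (c : ℕ))
          ∧ ((c : ℕ) ≤ b ∧ (c : ℕ) ≤ W)}) where
  toFun s :=
    ⟨⟨top s.1, ((peel_spec hd s.1 (by omega)).2.2.2.1)⟩,
     ⟨peelMap hd s.1, by
        obtain ⟨hs, hw, htop⟩ := s.2
        obtain ⟨h1, h2, h3, h4, h5⟩ := peel_spec hd s.1 (by omega)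
        simp only [Fin.val_mk]
        exact ⟨⟨by omega, by omega, h3⟩, htop, by omega⟩⟩⟩
  invFun t :=
    ⟨bumpMap hd t.2.1 (t.1 : ℕ), by
      obtain ⟨⟨hs, hw, htop⟩, hcb, hcW⟩ := t.2.2
      obtain ⟨h1, h2, h3, h4⟩ := bump_spec hd t.2.1 (t.1 : ℕ) t.1.isLt htop
      exact ⟨by omega, by omega, by omega⟩⟩
  left_inv s := by
    apply Subtype.ext
    obtain ⟨hs, hw, htop⟩ := s.2
    exact (peel_spec hd s.1 (by omega)).2.2.2.2
  right_inv := by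
    rintro ⟨c, x', ⟨⟨hs, hw, htop⟩, hcb, hcW⟩⟩
    obtain ⟨h1, h2, h3, h4⟩ := bump_spec hd x' (c : ℕ) c.isLt htop
    exact sigma_sub_ext (Fin.ext h3) h4

end SpiralProof
namespace SpiralProof
open Spiral Finset
open scoped Classical

variable {d : ℕ}

lemma multiset_sup_mem (s : Multiset ℕ) (hs : s ≠ 0) : s.sup ∈ s := by
  induction s using Multiset.induction_on with
  | empty => exact absurd rfl hs
  | cons a t ih =>
    rw [Multiset.sup_cons]
    by_cases ht : t = 0
    · subst ht
      simp
    · rcases le_total a t.sup with h | h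
      · rw [sup_eq_right.2 h]
        exact Multiset.mem_cons_of_mem (ih ht)
      · rw [sup_eq_left.2 h]
        exact Multiset.mem_cons_self a t

lemma multiset_add_sum_erase {s : Multiset ℕ} {a : ℕ} (h : a ∈ s) :
    a + (s.erase a).sum = s.sum := by
  conv_rhs => rw [← Multiset.cons_erase h]
  rw [Multiset.sum_cons]

lemma parts_eq_zero_of_le_zero {m : ℕ} (P : m.Partition)
    (h : ∀ p ∈ P.parts, p ≤ 0) : P.parts = 0 := by
  apply Multiset.eq_zero_of_forall_notMem
  intro a ha
  have := P.parts_pos ha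
  have := h a ha
  omega

lemma sup_consIf (c : ℕ) (s : Multiset ℕ) (hs : ∀ p ∈ s, p ≤ c) (hz : c = 0 → s = 0) :
    ((if 0 < c then ({c} : Multiset ℕ) else 0) + s).sup = c := by
  by_cases hc : 0 < c
  · rw [if_pos hc, Multiset.sup_add]
    have h1 : ({c} : Multiset ℕ).sup = c := by simp
    have h2 : s.sup ≤ c := Multiset.sup_le.2 hs
    rw [h1]
    exact sup_eq_left.2 h2
  · have hc0 : c = 0 := by omega
    rw [if_neg hc, hz hc0, hc0]
    simp

/-- building a partition of `W` from its largest part `c` and the rest. -/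
noncomputable def partBwd (hd : 0 < d) (n W b : ℕ)
    (t : Σ c : Fin d, {P' : (W - (c : ℕ)).Partition //
        (P'.parts.card ≤ n ∧ ∀ p ∈ P'.parts, p ≤ (c : ℕ))
          ∧ ((c : ℕ) ≤ b ∧ (c : ℕ) ≤ W)}) :
    {P : W.Partition // P.parts.card ≤ n + 1 ∧ ∀ p ∈ P.parts, p ≤ b} :=
  ⟨⟨(if 0 < (t.1 : ℕ) then ({(t.1 : ℕ)} : Multiset ℕ) else 0) + t.2.1.parts,
    by
      intro i hi
      rcases Multiset.mem_add.1 hi with hi | hi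
      · by_cases hc : 0 < (t.1 : ℕ)
        · rw [if_pos hc, Multiset.mem_singleton] at hi
          omega
        · rw [if_neg hc] at hi
          exact absurd hi (Multiset.notMem_zero i)
      · exact t.2.1.parts_pos hi,
    by
      rw [Multiset.sum_add]
      have h1 := t.2.1.parts_sum
      have h2 := t.2.2.2.2
      by_cases hc : 0 < (t.1 : ℕ)
      · rw [if_pos hc, Multiset.sum_singleton]
        omega
      · rw [if_neg hc, Multiset.sum_zero]
        omega⟩,
   by
    constructor
    · rw [Multiset.card_add]
      have h1 := t.2.2.1.1
      by_cases hc : 0 < (t.1 : ℕ)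
      · rw [if_pos hc, Multiset.card_singleton]
        omega
      · rw [if_neg hc]
        simp only [Multiset.card_zero]
        omega
    · intro p hp
      rcases Multiset.mem_add.1 hp with hp | hp
      · by_cases hc : 0 < (t.1 : ℕ)
        · rw [if_pos hc, Multiset.mem_singleton] at hp
          have := t.2.2.2.1
          omega
        · rw [if_neg hc] at hp
          exact absurd hp (Multiset.notMem_zero p)
      · have h1 := t.2.2.1.2 p hp
        have h2 := t.2.2.2.1
        omega⟩

lemma partBwd_bijective (hd : 0 < d) (n W b : ℕ) (hb : b < d) :
    Function.Bijective (partBwd hd n W b) := by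
  constructor
  · rintro ⟨c1, P1, hP1⟩ ⟨c2, P2, hP2⟩ heq
    have hparts : (if 0 < (c1 : ℕ) then ({(c1 : ℕ)} : Multiset ℕ) else 0) + P1.parts
        = (if 0 < (c2 : ℕ) then ({(c2 : ℕ)} : Multiset ℕ) else 0) + P2.parts :=
      congrArg (fun s : {P : W.Partition // P.parts.card ≤ n + 1 ∧ ∀ p ∈ P.parts, p ≤ b} =>
        s.1.parts) heq
    have hsup1 : ((if 0 < (c1 : ℕ) then ({(c1 : ℕ)} : Multiset ℕ) else 0) + P1.parts).sup
        = (c1 : ℕ) := by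
      apply sup_consIf _ _ hP1.1.2
      intro hc0
      apply parts_eq_zero_of_le_zero P1
      intro p hp
      have := hP1.1.2 p hp
      omega
    have hsup2 : ((if 0 < (c2 : ℕ) then ({(c2 : ℕ)} : Multiset ℕ) else 0) + P2.parts).sup
        = (c2 : ℕ) := by
      apply sup_consIf _ _ hP2.1.2
      intro hc0
      apply parts_eq_zero_of_le_zero P2
      intro p hp
      have := hP2.1.2 p hp
      omega
    have hc : c1 = c2 := by
      apply Fin.ext
      rw [← hsup1, ← hsup2, hparts]
    subst hc
    have hPP : P1.parts = P2.parts := add_left_cancel hparts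
    exact congrArg (Sigma.mk c1) (Subtype.ext (Nat.Partition.ext hPP))
  · rintro ⟨P, hcard, hbound⟩
    obtain ⟨c, hcdef⟩ : ∃ c0, P.parts.sup = c0 := ⟨_, rfl⟩
    have hcb : c ≤ b := hcdef ▸ Multiset.sup_le.2 hbound
    have hcd : c < d := lt_of_le_of_lt hcb hb
    have hcW : c ≤ W := by
      by_cases hP0 : P.parts = 0
      · rw [← hcdef, hP0]
        simp
      · have hmem := hcdef ▸ multiset_sup_mem P.parts hP0
        have h2 := Multiset.single_le_sum (fun x _ => Nat.zero_le x) _ hmem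
        rw [P.parts_sum] at h2
        exact h2
    have hsum' : (P.parts.erase c).sum = W - c := by
      by_cases hP0 : P.parts = 0
      · have hW : W = 0 := by rw [← P.parts_sum, hP0]; rfl
        have hc0 : c = 0 := by rw [← hcdef, hP0]; simp
        rw [hP0, hc0, hW]
        simp
      · have h3 := multiset_add_sum_erase (hcdef ▸ multiset_sup_mem P.parts hP0)
        rw [P.parts_sum] at h3
        omega
    have hposE : ∀ {i}, i ∈ P.parts.erase c → 0 < i :=
      fun h => P.parts_pos (Multiset.mem_of_mem_erase h)
    have hcardE : (P.parts.erase c).card ≤ n := by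
      by_cases hP0 : P.parts = 0
      · rw [hP0]
        simp
      · rw [Multiset.card_erase_of_mem (hcdef ▸ multiset_sup_mem P.parts hP0),
          Nat.pred_eq_sub_one]
        omega
    have hle : ∀ p ∈ P.parts.erase c, p ≤ c :=
      fun p hp => hcdef ▸ Multiset.le_sup (Multiset.mem_of_mem_erase hp)
    refine ⟨⟨⟨c, hcd⟩, ⟨⟨P.parts.erase c, hposE, hsum'⟩, ⟨hcardE, hle⟩, hcb, hcW⟩⟩, ?_⟩
    apply Subtype.ext
    apply Nat.Partition.ext
    show (if 0 < c then ({c} : Multiset ℕ) else 0) + P.parts.erase c = P.parts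
    by_cases hP0 : P.parts = 0
    · have hc0 : c = 0 := by rw [← hcdef, hP0]; simp
      rw [hP0, hc0]
      simp
    · have hc0 : 0 < c := P.parts_pos (hcdef ▸ multiset_sup_mem P.parts hP0)
      rw [if_pos hc0, Multiset.singleton_add,
        Multiset.cons_erase (hcdef ▸ multiset_sup_mem P.parts hP0)]

end SpiralProof
namespace SpiralProof
open Spiral Finset
open scoped Classical

variable {d : ℕ}

lemma finite_conf (n : ℕ) (P : (Fin d → ℕ) → Prop) (hP : ∀ x, P x → size x ≤ n) :
    Finite {x : Fin d → ℕ // P x} := by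
  let F : {x : Fin d → ℕ // P x} → (Fin d → Fin (n + 1)) := fun s i =>
    ⟨s.1 i, by
      have h1 := le_size s.1 i
      have h2 := hP s.1 s.2
      omega⟩
  apply Finite.of_injective F
  rintro ⟨x, hx⟩ ⟨y, hy⟩ h
  apply Subtype.ext
  funext i
  have := congrFun h i
  simpa [F, Fin.ext_iff] using this

lemma nat_card_sigma {ι : Type*} [Fintype ι] (f : ι → Type*) [∀ i, Finite (f i)] :
    Nat.card (Σ i, f i) = ∑ i, Nat.card (f i) := by
  letI : ∀ i, Fintype (f i) := fun i => Fintype.ofFinite (f i)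
  rw [Nat.card_eq_fintype_card, Fintype.card_sigma]
  exact Finset.sum_congr rfl fun i _ => (Nat.card_eq_fintype_card).symm

lemma nat_card_subtype_and {α : Type*} (P : α → Prop) (Q : Prop) :
    Nat.card {a : α // P a ∧ Q} = if Q then Nat.card {a : α // P a} else 0 := by
  by_cases hq : Q
  · rw [if_pos hq]
    exact Nat.card_congr (Equiv.subtypeEquivRight (fun a => by simp [hq]))
  · rw [if_neg hq]
    haveI : IsEmpty {a : α // P a ∧ Q} := ⟨fun s => hq s.2.2⟩
    exact Nat.card_of_isEmpty

lemma size_zero_eq {x : Fin d → ℕ} (h : size x = 0) : x = fun _ => 0 := by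
  funext i
  exact (Finset.sum_eq_zero_iff).1 h i (mem_univ i)

lemma weight_zero_fn : weight (fun _ : Fin d => 0) = 0 := by
  unfold weight
  simp

lemma top_zero_fn : top (fun _ : Fin d => 0) = 0 := by
  unfold top bgap
  simp

lemma base_x (W b : ℕ) :
    Nat.card {x : Fin d → ℕ // size x = 0 ∧ weight x = W ∧ top x ≤ b}
      = if W = 0 then 1 else 0 := by
  by_cases hW : W = 0
  · rw [if_pos hW]
    rw [Nat.card_eq_one_iff_unique]
    constructor
    · constructor
      intro a b2
      apply Subtype.ext
      rw [size_zero_eq a.2.1, size_zero_eq b2.2.1]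
    · refine ⟨⟨fun _ => 0, ?_, ?_, ?_⟩⟩
      · simp [size]
      · rw [weight_zero_fn, hW]
      · rw [top_zero_fn]
        omega
  · rw [if_neg hW]
    haveI : IsEmpty {x : Fin d → ℕ // size x = 0 ∧ weight x = W ∧ top x ≤ b} := by
      constructor
      rintro ⟨x, hs, hw, -⟩
      rw [size_zero_eq hs, weight_zero_fn] at hw
      exact hW hw.symm
    exact Nat.card_of_isEmpty

lemma base_p (W b : ℕ) :
    Nat.card {P : W.Partition // P.parts.card ≤ 0 ∧ ∀ p ∈ P.parts, p ≤ b}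
      = if W = 0 then 1 else 0 := by
  by_cases hW : W = 0
  · rw [if_pos hW]
    rw [Nat.card_eq_one_iff_unique]
    constructor
    · constructor
      intro a b2
      apply Subtype.ext
      apply Nat.Partition.ext
      have ha : a.1.parts = 0 := Multiset.card_eq_zero.1 (Nat.le_zero.1 a.2.1)
      have hb2 : b2.1.parts = 0 := Multiset.card_eq_zero.1 (Nat.le_zero.1 b2.2.1)
      rw [ha, hb2]
    · refine ⟨⟨⟨0, ?_, ?_⟩, ?_, ?_⟩⟩
      · intro i hi
        exact absurd hi (Multiset.notMem_zero i)
      · rw [hW]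
        rfl
      · simp
      · intro p hp
        exact absurd hp (Multiset.notMem_zero p)
  · rw [if_neg hW]
    haveI : IsEmpty {P : W.Partition // P.parts.card ≤ 0 ∧ ∀ p ∈ P.parts, p ≤ b} := by
      constructor
      rintro ⟨P, hc, -⟩
      have hp : P.parts = 0 := Multiset.card_eq_zero.1 (Nat.le_zero.1 hc)
      have := P.parts_sum
      rw [hp] at this
      exact hW (this.symm ▸ rfl)
    exact Nat.card_of_isEmpty

lemma key_count (hd : 0 < d) : ∀ n W b : ℕ, b < d →
    Nat.card {x : Fin d → ℕ // size x = n ∧ weight x = W ∧ top x ≤ b}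
      = Nat.card {P : W.Partition // P.parts.card ≤ n ∧ ∀ p ∈ P.parts, p ≤ b} := by
  intro n
  induction n with
  | zero =>
    intro W b hb
    rw [base_x W b, base_p W b]
  | succ n ih =>
    intro W b hb
    rw [Nat.card_congr (stepEquiv hd n W b),
      Nat.card_congr (Equiv.ofBijective _ (partBwd_bijective hd n W b hb)).symm]
    haveI hf1 : ∀ c : Fin d, Finite {x' : Fin d → ℕ //
        (size x' = n ∧ weight x' = W - (c : ℕ) ∧ top x' ≤ (c : ℕ))
          ∧ ((c : ℕ) ≤ b ∧ (c : ℕ) ≤ W)} := fun c =>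
      finite_conf n _ (fun x hx => le_of_eq hx.1.1)
    rw [nat_card_sigma, nat_card_sigma]
    apply Finset.sum_congr rfl
    intro c _
    rw [nat_card_subtype_and (fun x' : Fin d → ℕ =>
        size x' = n ∧ weight x' = W - (c : ℕ) ∧ top x' ≤ (c : ℕ)) ((c : ℕ) ≤ b ∧ (c : ℕ) ≤ W),
      nat_card_subtype_and (fun P' : (W - (c : ℕ)).Partition =>
        P'.parts.card ≤ n ∧ ∀ p ∈ P'.parts, p ≤ (c : ℕ)) ((c : ℕ) ≤ b ∧ (c : ℕ) ≤ W)]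
    by_cases hQ : (c : ℕ) ≤ b ∧ (c : ℕ) ≤ W
    · rw [if_pos hQ, if_pos hQ, ih (W - (c : ℕ)) (c : ℕ) c.isLt]
    · rw [if_neg hQ, if_neg hQ]

lemma top_le (hd : 0 < d) (x : Fin d → ℕ) : top x ≤ d - 1 := by
  have hT := maxBead_spec hd x
  have hsub : (univ.filter fun l => ∃ m, bgap x l m) ⊆ univ.erase (maxBead hd x) := by
    intro l hl
    simp only [mem_filter, mem_univ, true_and] at hl
    obtain ⟨m, hm⟩ := hl
    refine Finset.mem_erase.2 ⟨?_, mem_univ _⟩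
    intro hlT
    have hb : blt x (maxBead hd x) m := hlT ▸ bgap_blt x hm
    by_cases hmT : m = maxBead hd x
    · rw [hmT] at hb
      exact blt_irrefl x _ hb
    · exact blt_asymm x _ _ hb (hT m hmT)
  have h1 : top x ≤ (univ.erase (maxBead hd x)).card := Finset.card_le_card hsub
  rwa [Finset.card_erase_of_mem (mem_univ _), Finset.card_univ, Fintype.card_fin] at h1

end SpiralProof


open Spiral in
/-- For every `d ≥ 1` and all `n, W ∈ ℕ`, the number of `x ∈ ℕ^d` with
`n(x) = n` and `W(x) = W` equals the number of partitions of `W` with at most `n` parts,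
each part of size at most `d − 1`. -/
theorem statement0 (d : ℕ) (hd : 1 ≤ d) (n W : ℕ) :
    Nat.card {x : Fin d → ℕ // size x = n ∧ weight x = W} =
      Nat.card {P : Nat.Partition W // P.parts.card ≤ n ∧ ∀ p ∈ P.parts, p ≤ d - 1} := by
  have hd' : 0 < d := hd
  have h1 : Nat.card {x : Fin d → ℕ // size x = n ∧ weight x = W}
      = Nat.card {x : Fin d → ℕ // size x = n ∧ weight x = W ∧ SpiralProof.top x ≤ d - 1} :=
    Nat.card_congr (Equiv.subtypeEquivRight (fun x => by
      constructor
      · rintro ⟨hs, hw⟩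
        exact ⟨hs, hw, SpiralProof.top_le hd' x⟩
      · rintro ⟨hs, hw, -⟩
        exact ⟨hs, hw⟩))
  rw [h1, SpiralProof.key_count hd' n W (d - 1) (by omega)]
end

section
/- For every integer d ≥ 1, the identity Σ_{x ∈ ℕ^d} t^{n(x)} q^{W(x)} = ∏_{i=0}^{d−1} (1 − t q^i)^{−1} holds in the formal power series ring ℤ[[t,q]]; in particular the sum on the left is a well-defined power series (each coefficient is a finite count). -/
namespace Spiral

/-- The generating series `Σ_{x ∈ ℕ^d} t^{n(x)} q^{W(x)} ∈ ℤ[[t,q]]` (with `t = X 0`,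
`q = X 1`), defined coefficientwise: the coefficient of `t^n q^W` is the number of
configurations `x ∈ ℕ^d` with `size x = n` and `weight x = W`. -/
noncomputable def genSeries (d : ℕ) : MvPowerSeries (Fin 2) ℤ :=
  fun e => (Nat.card {x : Fin d → ℕ // size x = e 0 ∧ weight x = e 1} : ℤ)

end Spiral

namespace Spiral

open Finset Function

variable {d : ℕ}

def bead (x : Fin d → ℕ) (i : Fin d) : ℕ := d * x i + i

lemma bead_mod (x : Fin d → ℕ) (i : Fin d) : bead x i % d = i := by
  rw [bead, Nat.mul_add_mod, Nat.mod_eq_of_lt i.isLt]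

lemma bead_injective (x : Fin d → ℕ) : Injective (bead x) := fun i j h =>
  Fin.ext (by rw [← bead_mod x i, ← bead_mod x j, h])

lemma bead_update (x : Fin d → ℕ) (i : Fin d) (v : ℕ) :
    bead (update x i v) = update (bead x) i (d * v + i) := by
  funext j
  rcases eq_or_ne j i with rfl | hj
  · simp [bead]
  · simp [bead, hj]

lemma mul_add_sub_mul_add_div {a b r s : ℕ} (hr : r < d) (hs : s < d) :
    (d * b + s - (d * a + r)) / d = b - a - if s < r then 1 else 0 := by
  rcases le_or_gt b a with hab | hab
  · by_cases h0 : d * b + s ≤ d * a + r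
    · simp [Nat.sub_eq_zero_of_le h0, Nat.sub_eq_zero_of_le hab]
    · obtain rfl : b = a := by
        by_contra hne
        have : d * (b + 1) ≤ d * a := Nat.mul_le_mul_left d (by omega)
        rw [Nat.mul_add] at this
        omega
      rw [Nat.add_sub_add_left, Nat.div_eq_of_lt (by omega)]
      simp
  · obtain ⟨c, rfl⟩ := Nat.exists_eq_add_of_lt hab
    have hd : 0 < d := by omega
    split_ifs with h
    · rw [show d * (a + c + 1) + s - (d * a + r) = d * c + (d + s - r) by
          rw [Nat.mul_add, Nat.mul_add]; omega,
        Nat.mul_add_div hd, Nat.div_eq_of_lt (by omega)]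
      omega
    · rw [show d * (a + c + 1) + s - (d * a + r) = d * (c + 1) + (s - r) by
          rw [Nat.mul_add, Nat.mul_add, Nat.mul_add]; omega,
        Nat.mul_add_div hd, Nat.div_eq_of_lt (by omega)]
      omega

lemma bead_sub_bead_div (x : Fin d → ℕ) (i j : Fin d) :
    (bead x j - bead x i) / d = x j - x i - if j < i then 1 else 0 :=
  mul_add_sub_mul_add_div i.isLt j.isLt

lemma sum_sum_eq_sum_sum_lt {ι M : Type*} [Fintype ι] [LinearOrder ι] [AddCommMonoid M]
    (F : ι → ι → M)
    (hF : ∀ i, F i i = 0) :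
    ∑ i, ∑ j, F i j = ∑ i, ∑ j, if i < j then F i j + F j i else 0 := by
  have hsplit : ∀ i j, F i j = (if i < j then F i j else 0) + (if j < i then F i j else 0) := by
    intro i j
    rcases lt_trichotomy i j with h | rfl | h
    · simp [h, h.not_gt]
    · simp [hF]
    · simp [h, h.not_gt]
  calc ∑ i, ∑ j, F i j
      = ∑ i, ∑ j, ((if i < j then F i j else 0) + (if j < i then F i j else 0)) := by
        simp only [← hsplit]
    _ = ∑ i, ∑ j, (if i < j then F i j else 0) + ∑ i, ∑ j, (if i < j then F j i else 0) := by
        simp only [sum_add_distrib]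
        rw [Finset.sum_comm (f := fun i j => if j < i then F i j else 0)]
    _ = _ := by simp only [← sum_add_distrib, ite_add_zero]

lemma weight_eq_sum_sum_bead (x : Fin d → ℕ) :
    weight x = ∑ i, ∑ j, (bead x j - bead x i) / d := by
  rw [sum_sum_eq_sum_sum_lt _ (by simp), weight]
  refine sum_congr rfl fun i _ => sum_congr rfl fun j _ => ?_
  split_ifs with h
  · rw [bead_sub_bead_div, bead_sub_bead_div, if_neg h.not_gt, if_pos h]; simp
  · rfl

lemma sum_sum_sub_div_update {ι : Type*} [Fintype ι] [DecidableEq ι] {b : ι → ℕ}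
    (hb : Injective b) {k : ι} (hk : ∀ j, b j < b k + d) :
    ∑ i, ∑ j, (update b k (b k + d) j - update b k (b k + d) i) / d
      = ∑ i, ∑ j, (b j - b i) / d + #{i | b i < b k} := by
  have hd : 0 < d := by have := hk k; omega
  -- Every bead stays below `b k + d`, so only the quotients for the pairs `(i, k)` with
  -- `b i < b k` change, each by one.
  have key : ∀ i j, (update b k (b k + d) j - update b k (b k + d) i) / d
      = (b j - b i) / d + if j = k ∧ b i < b k then 1 else 0 := by
    intro i j
    rcases eq_or_ne i k with rfl | hi <;> rcases eq_or_ne j i with rfl | hj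
    · simp
    · have := hk j
      rw [update_self, update_of_ne hj, Nat.sub_eq_zero_of_le (by omega),
        Nat.div_eq_of_lt (a := b j - b i) (by omega)]
      simp [hj]
    · simp [hi]
    · rcases eq_or_ne j k with rfl | hjk
      · rw [update_self, update_of_ne hi]
        rcases lt_or_gt_of_ne (hb.ne hi) with hlt | hgt
        · rw [show b j + d - b i = b j - b i + d by omega, Nat.add_div_right _ hd]
          simp [hlt]
        · have := hk i
          rw [Nat.div_eq_of_lt (by omega), Nat.sub_eq_zero_of_le hgt.le]
          simp [hgt.not_gt]
      · simp [update_of_ne hi, hjk]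
  simp only [key, sum_add_distrib, card_filter]
  congr 1
  refine sum_congr rfl fun i _ => ?_
  simp [ite_and]

def rank (x : Fin d → ℕ) (i : Fin d) : Fin d :=
  ⟨#{j | bead x j < bead x i}, by
    have := card_lt_card <| (filter_ssubset (s := univ) (p := fun j => bead x j < bead x i)).mpr
      ⟨i, mem_univ i, lt_irrefl _⟩
    simpa using this⟩

lemma rank_lt_rank {x : Fin d → ℕ} {i j : Fin d} (h : bead x i < bead x j) :
    rank x i < rank x j :=
  Fin.mk_lt_mk.mpr <| card_lt_card <|
    (ssubset_iff_of_subset (monotone_filter_right _ fun _ _ hk => hk.trans h)).mpr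
      ⟨i, by simpa using h, by simp⟩

lemma rank_le_rank_of_imp {x y : Fin d → ℕ} {i j : Fin d}
    (h : ∀ k, bead x k < bead x i → bead y k < bead y j) : rank x i ≤ rank y j :=
  Fin.mk_le_mk.mpr <| card_le_card <| monotone_filter_right _ fun k _ => h k

lemma rank_injective (x : Fin d → ℕ) : Injective (rank x) := by
  intro i j h
  by_contra hne
  rcases lt_or_gt_of_ne ((bead_injective x).ne hne) with hlt | hlt
  · exact (rank_lt_rank hlt).ne h
  · exact (rank_lt_rank hlt).ne h.symm

noncomputable def atRank (x : Fin d → ℕ) : Fin d → Fin d :=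
  (Equiv.ofBijective (rank x) (Finite.injective_iff_bijective.mp (rank_injective x))).symm

lemma rank_atRank (x : Fin d → ℕ) (p : Fin d) : rank x (atRank x p) = p :=
  Equiv.ofBijective_apply_symm_apply _ _ p

lemma atRank_rank (x : Fin d → ℕ) (i : Fin d) : atRank x (rank x i) = i :=
  Equiv.ofBijective_symm_apply_apply _ _ i

def CanAdd (x : Fin d → ℕ) (p : Fin d) : Prop :=
  ∀ j, bead x j < bead x (atRank x p) + d

noncomputable def addPart (p : Fin d) (x : Fin d → ℕ) : Fin d → ℕ :=
  update x (atRank x p) (x (atRank x p) + 1)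

lemma size_update_add (x : Fin d → ℕ) (i : Fin d) (v : ℕ) :
    size (update x i v) + x i = size x + v := by
  rw [size, size, sum_update_of_mem (mem_univ i),
    sum_eq_add_sum_sdiff_singleton i x (absurd (mem_univ i))]
  ring

lemma size_addPart (p : Fin d) (x : Fin d → ℕ) : size (addPart p x) = size x + 1 := by
  have := size_update_add x (atRank x p) (x (atRank x p) + 1)
  rw [← addPart] at this
  omega

lemma bead_addPart (p : Fin d) (x : Fin d → ℕ) :
    bead (addPart p x) = update (bead x) (atRank x p) (bead x (atRank x p) + d) := by
  rw [addPart, bead_update, bead]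
  ring_nf

lemma bead_addPart_self (p : Fin d) (x : Fin d → ℕ) :
    bead (addPart p x) (atRank x p) = bead x (atRank x p) + d := by
  simp [bead_addPart]

lemma bead_addPart_of_ne {p j : Fin d} (x : Fin d → ℕ) (hj : j ≠ atRank x p) :
    bead (addPart p x) j = bead x j := by
  simp [bead_addPart, hj]

lemma weight_addPart {p : Fin d} {x : Fin d → ℕ} (h : CanAdd x p) :
    weight (addPart p x) = weight x + p := by
  rw [weight_eq_sum_sum_bead, weight_eq_sum_sum_bead, bead_addPart,
    sum_sum_sub_div_update (bead_injective x) h]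
  exact congrArg (_ + ·.val) (rank_atRank x p)

lemma bead_lt_bead_addPart {p j : Fin d} {x : Fin d → ℕ} (h : CanAdd x p) (hj : j ≠ atRank x p) :
    bead (addPart p x) j < bead (addPart p x) (atRank x p) := by
  rw [bead_addPart_self, bead_addPart_of_ne x hj]
  exact h j

lemma eq_of_forall_bead_lt {x : Fin d → ℕ} {i i' : Fin d} (h : ∀ j ≠ i, bead x j < bead x i)
    (h' : ∀ j ≠ i', bead x j < bead x i') : i = i' := by
  by_contra hne
  exact lt_asymm (h i' (Ne.symm hne)) (h' i hne)

lemma addPart_inj {p q : Fin d} {x y : Fin d → ℕ} (hp : CanAdd x p) (hq : CanAdd y q)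
    (h : addPart p x = addPart q y) : p = q ∧ x = y := by
  -- The moved bead is the topmost bead of the result, so both moves hit the same coordinate.
  have hi : atRank x p = atRank y q := eq_of_forall_bead_lt (fun j hj => bead_lt_bead_addPart hp hj)
    (h ▸ fun j hj => bead_lt_bead_addPart hq hj)
  obtain rfl : x = y := by
    funext j
    have := congrFun h j
    rcases eq_or_ne j (atRank x p) with rfl | hj
    · simpa [addPart, hi] using this
    · simpa [addPart, hj, hi ▸ hj] using this
  exact ⟨by rw [← rank_atRank x p, hi, rank_atRank], rfl⟩

lemma exists_addPart {x : Fin d → ℕ} (hx : size x ≠ 0) : ∃ q y, CanAdd y q ∧ addPart q y = x := by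
  obtain ⟨j₀, hj₀⟩ : ∃ j, x j ≠ 0 := by
    by_contra! h
    exact hx (sum_eq_zero fun j _ => h j)
  obtain ⟨i, -, hi⟩ := exists_max_image univ (bead x) ⟨j₀, mem_univ _⟩
  have hxi : 1 ≤ x i := by
    have h₁ := hi j₀ (mem_univ _)
    have h₂ : d ≤ d * x j₀ := Nat.le_mul_of_pos_right _ (Nat.pos_of_ne_zero hj₀)
    by_contra! h₀
    simp only [bead, Nat.lt_one_iff.mp h₀, mul_zero, zero_add] at h₁
    omega
  set y := update x i (x i - 1)
  have hy : bead y = update (bead x) i (bead x i - d) := by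
    rw [bead_update, bead, Nat.mul_sub_one]
    congr 1
    have : d ≤ d * x i := Nat.le_mul_of_pos_right _ hxi
    omega
  refine ⟨rank y i, y, fun j => ?_, ?_⟩
  · have : d ≤ bead x i := (Nat.le_mul_of_pos_right _ hxi).trans (Nat.le_add_right _ _)
    have hd : 0 < d := i.pos
    rw [atRank_rank, hy]
    rcases eq_or_ne j i with rfl | hj
    · simp only [update_self]; omega
    · have := lt_of_le_of_ne (hi j (mem_univ j)) ((bead_injective x).ne hj)
      simp only [update_self, update_of_ne hj]; omega
  · simp [addPart, atRank_rank, y, Nat.sub_add_cancel hxi]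

lemma canAdd_zero (p : Fin d) : CanAdd 0 p := fun j => by
  simp only [bead, Pi.zero_apply, mul_zero, zero_add]
  omega

lemma canAdd_addPart_iff {p q : Fin d} {x : Fin d → ℕ} (h : CanAdd x q) :
    CanAdd (addPart q x) p ↔ q ≤ p := by
  set i := atRank x q
  set i' := atRank (addPart q x) p
  constructor
  · intro hp
    rw [← rank_atRank x q, ← rank_atRank (addPart q x) p]
    refine rank_le_rank_of_imp fun k hk => ?_
    have hki : k ≠ i := by rintro rfl; exact lt_irrefl _ hk
    have := hp i
    rw [bead_addPart_self] at this
    rw [bead_addPart_of_ne x hki]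
    omega
  · intro hqp
    suffices bead (addPart q x) i < bead (addPart q x) i' + d from fun j =>
      (eq_or_ne j i).elim (fun hj => hj ▸ this) fun hj => (bead_lt_bead_addPart h hj).trans this
    rcases eq_or_ne i' i with hi | hi
    · have := h i
      rw [hi]
      omega
    rw [bead_addPart_self, bead_addPart_of_ne x hi, add_lt_add_iff_right]
    -- Otherwise the bead of rank `p` lies below the moved one, so its rank `p` is below `q`.
    by_contra! hle
    have hlt := lt_of_le_of_ne hle ((bead_injective x).ne hi)
    have hpi : rank (addPart q x) i' ≤ rank x i' := rank_le_rank_of_imp fun k hk => by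
      rcases eq_or_ne k i with rfl | hki
      · have := h i'
        rw [bead_addPart_self, bead_addPart_of_ne x hi] at hk
        omega
      · rwa [bead_addPart_of_ne x hki, bead_addPart_of_ne x hi] at hk
    have := (rank_lt_rank hlt).trans_le' hpi
    rw [rank_atRank, rank_atRank] at this
    exact this.not_ge hqp

noncomputable def ofParts : List (Fin d) → Fin d → ℕ
  | [] => 0
  | p :: l => addPart p (ofParts l)

lemma canAdd_ofParts {p : Fin d} {l : List (Fin d)} (hl : (p :: l).Pairwise (· ≥ ·)) :
    CanAdd (ofParts l) p := by
  induction l generalizing p with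
  | nil => exact canAdd_zero p
  | cons q l ih =>
    exact (canAdd_addPart_iff (ih hl.of_cons)).mpr (List.rel_of_pairwise_cons hl List.mem_cons_self)

lemma size_ofParts (l : List (Fin d)) : size (ofParts l) = l.length := by
  induction l with
  | nil => simp [ofParts, size]
  | cons p l ih => rw [ofParts, size_addPart, ih, List.length_cons]

lemma weight_ofParts {l : List (Fin d)} (hl : l.Pairwise (· ≥ ·)) :
    weight (ofParts l) = (l.map Fin.val).sum := by
  induction l with
  | nil => simp [ofParts, weight]
  | cons p l ih => rw [ofParts, weight_addPart (canAdd_ofParts hl), ih hl.of_cons]; simp [add_comm]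

lemma ofParts_inj {l l' : List (Fin d)} (hl : l.Pairwise (· ≥ ·)) (hl' : l'.Pairwise (· ≥ ·))
    (h : ofParts l = ofParts l') : l = l' := by
  have hlen := size_ofParts l ▸ size_ofParts l' ▸ congrArg size h
  induction l generalizing l' with
  | nil => exact (List.length_eq_zero_iff.mp hlen.symm).symm
  | cons p l ih =>
    cases l' with
    | nil => simp at hlen
    | cons p' l' =>
      obtain ⟨rfl, h'⟩ := addPart_inj (canAdd_ofParts hl) (canAdd_ofParts hl') h
      rw [ih hl.of_cons hl'.of_cons h' (by simpa using hlen)]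

lemma exists_ofParts (x : Fin d → ℕ) : ∃ l : List (Fin d), l.Pairwise (· ≥ ·) ∧ ofParts l = x := by
  induction hn : size x using Nat.strong_induction_on generalizing x with
  | _ n ih =>
    rcases eq_or_ne (size x) 0 with h0 | h0
    · exact ⟨[], .nil, funext fun i => (sum_eq_zero_iff.mp h0 i (mem_univ i)).symm⟩
    obtain ⟨q, y, hq, rfl⟩ := exists_addPart h0
    obtain ⟨l, hl, rfl⟩ := ih (size y) (by rw [← hn, size_addPart]; omega) y rfl
    refine ⟨q :: l, List.pairwise_cons.mpr ⟨?_, hl⟩, rfl⟩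
    cases l with
    | nil => simp
    | cons r l =>
      have hrq : r ≤ q := (canAdd_addPart_iff (canAdd_ofParts hl)).mp hq
      intro a ha
      rcases List.mem_cons.mp ha with rfl | ha
      · exact hrq
      · exact (List.rel_of_pairwise_cons hl ha).trans hrq

noncomputable def ofMultiset (s : Multiset (Fin d)) : Fin d → ℕ :=
  ofParts (s.sort (· ≥ ·))

lemma ofMultiset_bijective : Bijective (ofMultiset (d := d)) := by
  refine ⟨fun s s' h => ?_, fun x => ?_⟩
  · rw [← Multiset.sort_eq s (· ≥ ·), ← Multiset.sort_eq s' (· ≥ ·),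
      ofParts_inj (Multiset.pairwise_sort _ _) (Multiset.pairwise_sort _ _) h]
  · obtain ⟨l, hl, rfl⟩ := exists_ofParts x
    exact ⟨l, congrArg ofParts (List.mergeSort_eq_self _ hl)⟩

lemma size_ofMultiset (s : Multiset (Fin d)) : size (ofMultiset s) = Multiset.card s := by
  rw [ofMultiset, size_ofParts, Multiset.length_sort]

lemma weight_ofMultiset (s : Multiset (Fin d)) :
    weight (ofMultiset s) = (s.map Fin.val).sum := by
  conv_rhs => rw [← Multiset.sort_eq s (· ≥ ·)]
  rw [ofMultiset, weight_ofParts (Multiset.pairwise_sort _ _), Multiset.map_coe, Multiset.sum_coe]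

section Series

open MvPowerSeries

noncomputable def countSeries {α : Type*} (s w : α → ℕ) : MvPowerSeries (Fin 2) ℤ :=
  fun e => (Nat.card {a // s a = e 0 ∧ w a = e 1} : ℤ)

variable {α β : Type*} {s w : α → ℕ} {s' w' : β → ℕ}

lemma coeff_countSeries (e : Fin 2 →₀ ℕ) :
    coeff e (countSeries s w) = Nat.card {a // s a = e 0 ∧ w a = e 1} := rfl

lemma countSeries_congr (f : α ≃ β) (hs : ∀ a, s' (f a) = s a) (hw : ∀ a, w' (f a) = w a) :
    countSeries s' w' = countSeries s w := by
  ext e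
  simp only [coeff_countSeries]
  exact congrArg _ (Nat.card_congr (f.subtypeEquiv fun a => by rw [hs, hw])).symm

lemma coeff_X_mul_X_pow_mul (k : ℕ) (φ : MvPowerSeries (Fin 2) ℤ) (e : Fin 2 →₀ ℕ) :
    coeff e (X 0 * X 1 ^ k * φ) =
      if 1 ≤ e 0 ∧ k ≤ e 1 then coeff (e - (Finsupp.single 0 1 + Finsupp.single 1 k)) φ else 0 := by
  rw [X_def, X_pow_eq, monomial_mul_monomial, one_mul, coeff_monomial_mul, one_mul]
  congr 1
  simp [Finsupp.le_def, Fin.forall_fin_two]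

lemma one_sub_X_mul_X_pow_mul_countSeries (k : ℕ)
    (hfin : ∀ n W, {a | s a = n ∧ w a = W}.Finite) (f : β ⊕ α ≃ α)
    (hl : ∀ b, s (f (.inl b)) = s' b ∧ w (f (.inl b)) = w' b)
    (hr : ∀ a, s (f (.inr a)) = s a + 1 ∧ w (f (.inr a)) = w a + k) :
    (1 - X 0 * X 1 ^ k) * countSeries s w = countSeries s' w' := by
  ext e
  have hsplit : Nat.card {a // s a = e 0 ∧ w a = e 1} =
      Nat.card {b // s' b = e 0 ∧ w' b = e 1} +
        Nat.card {a // s a + 1 = e 0 ∧ w a + k = e 1} := by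
    have E : {a // s a = e 0 ∧ w a = e 1} ≃
        {b // s' b = e 0 ∧ w' b = e 1} ⊕ {a // s a + 1 = e 0 ∧ w a + k = e 1} :=
      (f.subtypeEquiv (p := fun x => s (f x) = e 0 ∧ w (f x) = e 1) fun _ => Iff.rfl).symm.trans <|
      (Equiv.subtypeSum (p := fun x => s (f x) = e 0 ∧ w (f x) = e 1)).trans <|
      Equiv.sumCongr
        (Equiv.subtypeEquivRight (p := fun b => s (f (.inl b)) = e 0 ∧ w (f (.inl b)) = e 1)
          fun b => by rw [(hl b).1, (hl b).2])
        (Equiv.subtypeEquivRight (p := fun a => s (f (.inr a)) = e 0 ∧ w (f (.inr a)) = e 1)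
          fun a => by rw [(hr a).1, (hr a).2])
    have : Finite {a // s a = e 0 ∧ w a = e 1} := (hfin (e 0) (e 1)).to_subtype
    have := Finite.of_equiv _ E
    have : Finite {b // s' b = e 0 ∧ w' b = e 1} := .sum_left {a // s a + 1 = e 0 ∧ w a + k = e 1}
    have : Finite {a // s a + 1 = e 0 ∧ w a + k = e 1} := .sum_right {b // s' b = e 0 ∧ w' b = e 1}
    rw [← Nat.card_sum, Nat.card_congr E]
  have hshift : Nat.card {a // s a + 1 = e 0 ∧ w a + k = e 1} =
      if 1 ≤ e 0 ∧ k ≤ e 1 then Nat.card {a // s a = e 0 - 1 ∧ w a = e 1 - k} else 0 := by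
    split_ifs with hc
    · exact Nat.card_congr (Equiv.subtypeEquivRight fun a => by omega)
    · have : IsEmpty {a // s a + 1 = e 0 ∧ w a + k = e 1} := ⟨fun a => hc ⟨by omega, by omega⟩⟩
      exact Nat.card_of_isEmpty
  rw [sub_mul, one_mul, map_sub, coeff_X_mul_X_pow_mul, coeff_countSeries, coeff_countSeries,
    coeff_countSeries, hsplit, hshift]
  split_ifs <;> simp

lemma finite_setOf_sum_eq {ι : Type*} [Fintype ι] (n : ℕ) :
    {m : ι → ℕ | ∑ i, m i = n}.Finite := by
  classical
  exact (piAntidiag univ n).finite_toSet.subset fun m hm => by simpa using hm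

def lastCountEquiv (d : ℕ) : (Fin d → ℕ) ⊕ (Fin (d + 1) → ℕ) ≃ (Fin (d + 1) → ℕ) where
  toFun := Sum.elim (Fin.snoc · 0) fun m => Fin.snoc (Fin.init m) (m (Fin.last d) + 1)
  invFun m := if m (Fin.last d) = 0 then .inl (Fin.init m)
    else .inr (Fin.snoc (Fin.init m) (m (Fin.last d) - 1))
  left_inv := by rintro (m | m) <;> simp
  right_inv m := by
    by_cases h : m (Fin.last d) = 0
    · simp only [h, ↓reduceIte, Sum.elim_inl]
      rw [← h]
      exact Fin.snoc_init_self m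
    · simp [h, Nat.sub_add_cancel (Nat.one_le_iff_ne_zero.mpr h)]

lemma sum_snoc_mul_val (m : Fin d → ℕ) (k : ℕ) :
    ∑ i, (Fin.snoc m k : Fin (d + 1) → ℕ) i * i = ∑ i : Fin d, m i * i + k * d := by
  simp [Fin.sum_univ_castSucc]

lemma prod_one_sub_mul_countSeries (d : ℕ) :
    (∏ i ∈ range d, (1 - X 0 * X 1 ^ i)) *
      countSeries (fun m : Fin d → ℕ => ∑ i, m i) (fun m => ∑ i, m i * i) = 1 := by
  induction d with
  | zero =>
    rw [prod_range_zero, one_mul]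
    ext e
    rw [coeff_countSeries, coeff_one]
    rcases eq_or_ne e 0 with rfl | he
    · simp
    · have : ¬(0 = e 0 ∧ 0 = e 1) := fun h =>
        he (Finsupp.ext (Fin.forall_fin_two.mpr ⟨h.1.symm, h.2.symm⟩))
      simp [he, this]
  | succ d ih =>
    rw [prod_range_succ, mul_assoc, one_sub_X_mul_X_pow_mul_countSeries d
      (fun n _ => (finite_setOf_sum_eq n).subset fun _ h => h.1) (lastCountEquiv d), ih]
    · intro m
      simp [lastCountEquiv, sum_snoc_mul_val]
    · intro m
      obtain ⟨m, k, rfl⟩ : ∃ m' k, m = Fin.snoc m' k :=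
        ⟨Fin.init m, m (Fin.last d), (Fin.snoc_init_self m).symm⟩
      simp [lastCountEquiv, sum_snoc_mul_val, add_mul, add_assoc]

lemma sum_count_mul_eq_sum_map (s : Multiset (Fin d)) (g : Fin d → ℕ) :
    ∑ p, s.count p * g p = (s.map g).sum := by
  induction s using Multiset.induction_on with
  | empty => simp
  | cons a s ih => simp [Multiset.count_cons, add_mul, Finset.sum_add_distrib, ih, add_comm]

end Series

end Spiral

open Spiral MvPowerSeries in
theorem statement1_general (d : ℕ) :
    (∀ n W : ℕ, {x : Fin d → ℕ | size x = n ∧ weight x = W}.Finite) ∧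
    (∏ i ∈ Finset.range d, (1 - X 0 * X 1 ^ i : MvPowerSeries (Fin 2) ℤ)) *
      genSeries d = 1 := by
  refine ⟨fun n W => (finite_setOf_sum_eq n).subset fun x hx => hx.1, ?_⟩
  have hparts : genSeries d =
      countSeries (fun s : Multiset (Fin d) => Multiset.card s) (fun s => (s.map Fin.val).sum) :=
    countSeries_congr (Equiv.ofBijective _ ofMultiset_bijective) size_ofMultiset weight_ofMultiset
  have hcounts : countSeries (fun s : Multiset (Fin d) => Multiset.card s)
      (fun s => (s.map Fin.val).sum) =
      countSeries (fun m : Fin d → ℕ => ∑ i, m i) (fun m => ∑ i, m i * i) :=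
    (countSeries_congr (Multiset.toFinsupp.toEquiv.trans Finsupp.equivFunOnFinite)
      (fun s => by simp) (fun s => sum_count_mul_eq_sum_map s Fin.val)).symm
  rw [hparts, hcounts, prod_one_sub_mul_countSeries]

open Spiral MvPowerSeries in
/-- For every `d ≥ 1`, `Σ_{x ∈ ℕ^d} t^{n(x)} q^{W(x)} = ∏_{i=0}^{d-1} (1 - t qⁱ)⁻¹`
holds in `ℤ[[t,q]]`; in particular the sum on the left is a well-defined power series
(each coefficient is a finite count). The identity is stated multiplicatively:
`(∏_{i<d} (1 - t qⁱ)) · (Σ_x t^{n(x)} q^{W(x)}) = 1`, which is equivalent since each factor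
`1 - t qⁱ` is a unit of `ℤ[[t,q]]`. -/
theorem statement1 (d : ℕ) (hd : 1 ≤ d) :
    (∀ n W : ℕ, {x : Fin d → ℕ | size x = n ∧ weight x = W}.Finite) ∧
    (∏ i ∈ Finset.range d, (1 - X 0 * X 1 ^ i : MvPowerSeries (Fin 2) ℤ)) *
      genSeries d = 1 :=
  statement1_general d
end

section
/- For all j, j′ ∈ [d], the spiral shifting operators commute: g_{j′} ∘ g_j = g_j ∘ g_{j′} as maps from ℕ^d to ℕ^d. -/
namespace Spiral

/-- The configuration `x` as a set of points of `[d] × ℕ`: the point `(i, n)` (seat `i`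
0-indexed, level `n`) is encoded as the natural number `n*d + i`. The usual order on the
encodings is exactly the height order `≺` (height `h(i,n) = n + i/d`), and the spiral
shift `δ + s/d` is encoded as `+ s`. -/
def pts (d : ℕ) (x : Fin d → ℕ) : Finset ℕ :=
  Finset.image (fun i : Fin d => x i * d + i.val) Finset.univ

/-- The points of `x` listed in increasing height order: `δ¹(x), …, δ^d(x)`. -/
def sortedPts (d : ℕ) (x : Fin d → ℕ) : List ℕ :=
  (pts d x).sort (· ≤ ·)

/-- The lowest point strictly above `p` (along the spiral) whose seat lies in `S`. -/
noncomputable def nextPt (d : ℕ) (S : Finset ℕ) (p : ℕ) : ℕ :=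
  sInf {q : ℕ | p < q ∧ q % d ∈ S}

/-- The spiral shifting operator `g_j` (for `1 ≤ j ≤ d`): it fixes the lowest `j - 1`
points `δ¹(x), …, δ^{j-1}(x)` and moves each remaining point `δ^k(x)` (`k ≥ j`) to
`δ^k(x) + s_k/d`, where `s_k` is the minimal positive integer such that the seat of
`δ^k(x) + s_k/d` lies in `{i(δ^j(x)), …, i(δ^d(x))}`. The resulting configuration is read
off from the new point set (which has exactly one point per seat). -/
noncomputable def gOp (d : ℕ) (j : ℕ) (x : Fin d → ℕ) : Fin d → ℕ := fun i =>
  let L := sortedPts d x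
  let low := L.take (j - 1)
  let high := L.drop (j - 1)
  let S : Finset ℕ := high.toFinset.image (· % d)
  let Q : Finset ℕ := low.toFinset ∪ (high.map (nextPt d S)).toFinset
  ∑ q ∈ Q.filter (fun q => q % d = i.val), q / d

/-- `g^a := g₁^{a₁} ∘ ⋯ ∘ g_d^{a_d}` (here `a i` is the exponent of `g_{i+1}`). -/
noncomputable def gIter (d : ℕ) (a : Fin d → ℕ) (x : Fin d → ℕ) : Fin d → ℕ :=
  (List.finRange d).foldr (fun j y => (gOp d (j.val + 1))^[a j] y) x

end Spiral

/-!
Encode the point `(i, n)` as `n * d + i`, so that height order is the order of `ℕ` and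
`δ + s/d` is `δ + s`. For a set `S` of seats, `nextPt d S` is the successor map of the
`S`-spiral (the points with seat in `S`); it commutes with translation by `d`, hence induces a
permutation of `S`. The operator `g_j` moves each of the points `δ^j, …, δ^d`, whose seats form
`S`, one step along the `S`-spiral, preserving their order.

For `j ≤ j'` the seats `S'` of `δ^{j'}, …, δ^d` lie in `S`, and a step along the `S`-spiral
is an order isomorphism from the `S'`-spiral onto the spiral of the permuted seats of `S'`.
So moving a top point first by `g_j` and then one step along the permuted spiral (this is
`g_{j'}` after `g_j`) is the same as moving it along the `S'`-spiral and then by `g_j`, while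
the points `δ^j, …, δ^{j'-1}` are moved by `g_j` alone in both orders.
-/

namespace Spiral

variable {d : ℕ}

section nextPt

variable {S : Finset ℕ} {n m p q a v : ℕ}

lemma exists_lt_mod_mem (hd : 0 < d) (hp : p % d ∈ S) (n : ℕ) : ∃ q, n < q ∧ q % d ∈ S := by
  have : n + 1 ≤ (n + 1) * d := Nat.le_mul_of_pos_right _ hd
  refine ⟨p % d + (n + 1) * d, by omega, ?_⟩
  rwa [Nat.add_mul_mod_self_right, Nat.mod_mod]

lemma nextPt_spec (h : ∃ q, n < q ∧ q % d ∈ S) : n < nextPt d S n ∧ nextPt d S n % d ∈ S :=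
  Nat.sInf_mem h

lemma nextPt_le (h : n < q) (hq : q % d ∈ S) : nextPt d S n ≤ q :=
  Nat.sInf_le ⟨h, hq⟩

lemma lt_nextPt (hd : 0 < d) (hp : p % d ∈ S) (n : ℕ) : n < nextPt d S n :=
  (nextPt_spec (exists_lt_mod_mem hd hp n)).1

lemma nextPt_mod_mem (hd : 0 < d) (hp : p % d ∈ S) (n : ℕ) : nextPt d S n % d ∈ S :=
  (nextPt_spec (exists_lt_mod_mem hd hp n)).2

lemma nextPt_mono (hd : 0 < d) (hp : p % d ∈ S) (h : n ≤ m) : nextPt d S n ≤ nextPt d S m :=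
  nextPt_le (h.trans_lt (lt_nextPt hd hp m)) (nextPt_mod_mem hd hp m)

lemma nextPt_lt_nextPt (hd : 0 < d) (h : n < q) (hq : q % d ∈ S) :
    nextPt d S n < nextPt d S q :=
  (nextPt_le h hq).trans_lt (lt_nextPt hd hq q)

lemma nextPt_add (hd : 0 < d) (hp : p % d ∈ S) (n : ℕ) :
    nextPt d S (n + d) = nextPt d S n + d := by
  obtain ⟨r, hr⟩ : ∃ r, nextPt d S (n + d) = r + d :=
    ⟨nextPt d S (n + d) - d, by have := lt_nextPt hd hp (n + d); omega⟩
  have hr_mem : r % d ∈ S := by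
    rw [← Nat.add_mod_right, ← hr]; exact nextPt_mod_mem hd hp _
  have hnr : n < r := by have := lt_nextPt hd hp (n + d); omega
  refine le_antisymm (nextPt_le (by have := lt_nextPt hd hp n; omega) ?_) ?_
  · rw [Nat.add_mod_right]; exact nextPt_mod_mem hd hp n
  · rw [hr]; exact Nat.add_le_add_right (nextPt_le hnr hr_mem) d

lemma nextPt_add_mul (hd : 0 < d) (hp : p % d ∈ S) (n k : ℕ) :
    nextPt d S (n + d * k) = nextPt d S n + d * k := by
  induction k with
  | zero => simp
  | succ k ih => rw [Nat.mul_succ, ← add_assoc, nextPt_add hd hp, ih, add_assoc]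

lemma nextPt_mod (hd : 0 < d) (hp : p % d ∈ S) (n : ℕ) :
    nextPt d S n % d = nextPt d S (n % d) % d := by
  conv_lhs => rw [← Nat.mod_add_div n d, nextPt_add_mul hd hp, Nat.add_mul_mod_self_left]

lemma exists_nextPt_eq (ha : a % d ∈ S) (hv : v % d ∈ S) (hav : a < v) :
    ∃ w, a ≤ w ∧ w % d ∈ S ∧ nextPt d S w = v := by
  set F := (Finset.range v).filter (fun t => t % d ∈ S)
  have haF : a ∈ F := Finset.mem_filter.mpr ⟨Finset.mem_range.mpr hav, ha⟩
  obtain ⟨hwv, hw⟩ := Finset.mem_filter.mp (F.max'_mem ⟨a, haF⟩)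
  rw [Finset.mem_range] at hwv
  refine ⟨F.max' ⟨a, haF⟩, F.le_max' a haF, hw, le_antisymm (nextPt_le hwv hv) ?_⟩
  obtain ⟨hlt, hmem⟩ := nextPt_spec (S := S) ⟨v, hwv, hv⟩
  by_contra! h
  exact absurd (F.le_max' _ (Finset.mem_filter.mpr ⟨Finset.mem_range.mpr h, hmem⟩)) hlt.not_ge

lemma mod_mem_of_mem (hS : ∀ s ∈ S, s < d) (hs : n ∈ S) : n % d ∈ S := by
  rwa [Nat.mod_eq_of_lt (hS n hs)]

lemma image_nextPt_mod (hd : 0 < d) (hS : ∀ s ∈ S, s < d) :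
    S.image (fun s => nextPt d S s % d) = S := by
  refine Finset.Subset.antisymm (fun r hr => ?_) (fun s hs => ?_)
  · obtain ⟨s, hs, rfl⟩ := Finset.mem_image.mp hr
    exact nextPt_mod_mem hd (mod_mem_of_mem hS hs) s
  · -- `s` is the seat reached from the `S`-predecessor of `s + d`
    have hsd : (s + d) % d = s := by rw [Nat.add_mod_right, Nat.mod_eq_of_lt (hS s hs)]
    obtain ⟨w, -, hw, hwv⟩ := exists_nextPt_eq (mod_mem_of_mem hS hs) (by rwa [hsd])
      (Nat.lt_add_of_pos_right hd)
    exact Finset.mem_image.mpr ⟨w % d, hw, by rw [← nextPt_mod hd hw, hwv, hsd]⟩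

lemma mod_eq_of_nextPt_mod_eq (hd : 0 < d) (hS : ∀ s ∈ S, s < d) (hp : p % d ∈ S)
    (hq : q % d ∈ S) (h : nextPt d S p % d = nextPt d S q % d) : p % d = q % d :=
  Finset.card_image_iff.mp (by rw [image_nextPt_mod hd hS]) hp hq
    (by rwa [nextPt_mod hd hp p, nextPt_mod hd hq q] at h)

lemma nextPt_image_nextPt {S' : Finset ℕ} {t : ℕ} (hd : 0 < d) (hS : ∀ s ∈ S, s < d)
    (hS' : S' ⊆ S) (ht : t % d ∈ S') :
    nextPt d (S'.image fun s => nextPt d S s % d) (nextPt d S t) =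
      nextPt d S (nextPt d S' t) := by
  set S₂ := S'.image fun s => nextPt d S s % d
  set u := nextPt d S' t
  have htu : t < u := lt_nextPt hd ht t
  have hu : u % d ∈ S' := nextPt_mod_mem hd ht t
  have hσu : nextPt d S u % d ∈ S₂ :=
    Finset.mem_image.mpr ⟨u % d, hu, (nextPt_mod hd (hS' hu) u).symm⟩
  have hσtu := nextPt_lt_nextPt hd htu (hS' hu)
  refine le_antisymm (nextPt_le hσtu hσu) ?_
  obtain ⟨hv, hvS₂⟩ := nextPt_spec (S := S₂) ⟨_, hσtu, hσu⟩
  obtain ⟨s, hs, hsv⟩ := Finset.mem_image.mp hvS₂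
  have hsS : s % d ∈ S := mod_mem_of_mem hS (hS' hs)
  obtain ⟨w, htw, hw, hwv⟩ := exists_nextPt_eq (nextPt_mod_mem hd (hS' ht) t)
    (hsv ▸ nextPt_mod_mem hd hsS s) hv
  have hws : w % d = s := by
    rw [mod_eq_of_nextPt_mod_eq hd hS hw hsS (by rw [hwv, ← hsv]),
      Nat.mod_eq_of_lt (hS s (hS' hs))]
  rw [← hwv]
  exact nextPt_mono hd (hS' hu)
    (nextPt_le ((lt_nextPt hd (hS' ht) t).trans_le htw) (hws ▸ hs))

end nextPt

def seats (d : ℕ) (L : List ℕ) : Finset ℕ := L.toFinset.image (· % d)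

/-- `shiftFrom d (j - 1)` is `g_j` acting on the points listed in increasing height order. -/
noncomputable def shiftFrom (d k : ℕ) (L : List ℕ) : List ℕ :=
  L.take k ++ (L.drop k).map (nextPt d (seats d (L.drop k)))

section seats

variable {L M : List ℕ} {q : ℕ}

lemma mod_mem_seats (hq : q ∈ L) : q % d ∈ seats d L :=
  Finset.mem_image_of_mem _ (List.mem_toFinset.mpr hq)

lemma lt_of_mem_seats (hd : 0 < d) : ∀ s ∈ seats d L, s < d := by
  intro s hs
  obtain ⟨q, -, rfl⟩ := Finset.mem_image.mp hs
  exact Nat.mod_lt q hd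

lemma seats_append : seats d (L ++ M) = seats d L ∪ seats d M := by
  simp only [seats, List.toFinset_append, Finset.image_union]

lemma seats_mono (h : L ⊆ M) : seats d L ⊆ seats d M :=
  Finset.image_subset_image fun _ hq => List.mem_toFinset.mpr (h (List.mem_toFinset.mp hq))

lemma seats_map_nextPt {S : Finset ℕ} (hd : 0 < d) (hL : seats d L ⊆ S) :
    seats d (L.map (nextPt d S)) = (seats d L).image (fun s => nextPt d S s % d) := by
  ext r
  simp only [seats, Finset.mem_image, List.mem_toFinset, List.mem_map]
  constructor
  · rintro ⟨_, ⟨q, hq, rfl⟩, rfl⟩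
    exact ⟨q % d, ⟨q, hq, rfl⟩, (nextPt_mod hd (hL (mod_mem_seats hq)) q).symm⟩
  · rintro ⟨_, ⟨q, hq, rfl⟩, rfl⟩
    exact ⟨_, ⟨q, hq, rfl⟩, nextPt_mod hd (hL (mod_mem_seats hq)) q⟩

end seats

section shiftFrom

variable {k k' : ℕ} {L : List ℕ}

lemma take_shiftFrom (hk : k ≤ k') :
    (shiftFrom d k L).take k' =
      L.take k ++ ((L.take k').drop k).map (nextPt d (seats d (L.drop k))) := by
  rcases le_total k L.length with h | h
  · simp [shiftFrom, List.take_append, List.drop_take, List.map_take, List.map_drop, h, hk]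
  · simp [shiftFrom, h, List.take_of_length_le, List.drop_of_length_le, h.trans hk]

lemma drop_shiftFrom (hk : k ≤ k') :
    (shiftFrom d k L).drop k' = (L.drop k').map (nextPt d (seats d (L.drop k))) := by
  rcases le_total k L.length with h | h
  · simp [shiftFrom, List.drop_append, List.map_drop, List.drop_drop, h, hk]
  · simp [shiftFrom, h, List.take_of_length_le, List.drop_of_length_le, h.trans hk]

lemma take_shiftFrom_of_le (hk : k ≤ k') : (shiftFrom d k' L).take k = L.take k := by
  rcases le_total k' L.length with h | h
  · simp [shiftFrom, List.take_append, List.take_take, h, hk]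
  · simp [shiftFrom, h, List.take_of_length_le, List.drop_of_length_le]

lemma drop_shiftFrom_of_le (hk : k ≤ k') :
    (shiftFrom d k' L).drop k =
      (L.take k').drop k ++ (L.drop k').map (nextPt d (seats d (L.drop k'))) := by
  rcases le_total k' L.length with h | h
  · simp [shiftFrom, List.drop_append, h, hk]
  · simp [shiftFrom, h, List.take_of_length_le, List.drop_of_length_le]

lemma length_shiftFrom : (shiftFrom d k L).length = L.length := by
  simp only [shiftFrom, List.length_append, List.length_map, List.length_take, List.length_drop]
  omega

lemma pairwise_shiftFrom (hd : 0 < d) (hL : L.Pairwise (· < ·)) :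
    (shiftFrom d k L).Pairwise (· < ·) := by
  rw [← List.take_append_drop k L, List.pairwise_append] at hL
  obtain ⟨hlow, hhigh, hcross⟩ := hL
  refine List.pairwise_append.mpr ⟨hlow, List.pairwise_map.mpr
    (hhigh.imp_of_mem fun _ hb hab => nextPt_lt_nextPt hd hab (mod_mem_seats hb)), ?_⟩
  intro a ha b hb
  obtain ⟨q, hq, rfl⟩ := List.mem_map.mp hb
  exact (hcross a ha q hq).trans (lt_nextPt hd (mod_mem_seats hq) q)

lemma nodup_map_mod_shiftFrom (hd : 0 < d) (hres : (L.map (· % d)).Nodup) :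
    ((shiftFrom d k L).map (· % d)).Nodup := by
  rw [← List.take_append_drop k L, List.map_append, List.nodup_append] at hres
  obtain ⟨hlow, hhigh, hdisj⟩ := hres
  rw [shiftFrom, List.map_append, List.nodup_append, List.map_map]
  refine ⟨hlow, hhigh.of_map _ |>.map_on fun a ha b hb h =>
    List.inj_on_of_nodup_map hhigh ha hb (mod_eq_of_nextPt_mod_eq hd (lt_of_mem_seats hd)
      (mod_mem_seats ha) (mod_mem_seats hb) h), ?_⟩
  intro a ha b hb hab
  obtain ⟨q, hq, rfl⟩ := List.mem_map.mp hb
  obtain ⟨r, hr, hrq⟩ : ∃ r ∈ L.drop k, r % d = nextPt d (seats d (L.drop k)) q % d := by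
    simpa [seats] using nextPt_mod_mem hd (mod_mem_seats hq) q
  exact hdisj a ha _ (List.mem_map_of_mem hr) (hab.trans hrq.symm)

theorem shiftFrom_comm (hd : 0 < d) (hk : k ≤ k') :
    shiftFrom d k' (shiftFrom d k L) = shiftFrom d k (shiftFrom d k' L) := by
  set S := seats d (L.drop k)
  set S' := seats d (L.drop k')
  have hS : ∀ s ∈ S, s < d := lt_of_mem_seats hd
  have hS'S : S' ⊆ S := seats_mono (List.drop_sublist_drop_left L hk).subset
  have hseats : seats d ((shiftFrom d k L).drop k') = S'.image fun s => nextPt d S s % d := by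
    rw [drop_shiftFrom hk, seats_map_nextPt hd hS'S]
  have hseats' : seats d ((shiftFrom d k' L).drop k) = S := by
    rw [drop_shiftFrom_of_le hk, seats_append, seats_map_nextPt hd subset_rfl,
      image_nextPt_mod hd (lt_of_mem_seats hd), ← seats_append, List.drop_take,
      show L.drop k' = (L.drop k).drop (k' - k) by rw [List.drop_drop, Nat.add_sub_cancel' hk],
      List.take_append_drop]
  rw [shiftFrom.eq_1 d k', shiftFrom.eq_1 d k (shiftFrom d k' L), hseats, hseats', take_shiftFrom hk, take_shiftFrom_of_le hk, drop_shiftFrom hk,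
    drop_shiftFrom_of_le hk]
  simp only [List.map_append, List.map_map, List.append_assoc]
  congr 2
  refine List.map_congr_left fun t ht => ?_
  exact nextPt_image_nextPt hd hS hS'S (mod_mem_seats ht)

end shiftFrom

def ofPts (d : ℕ) (Q : Finset ℕ) : Fin d → ℕ :=
  fun i => ∑ q ∈ Q.filter (fun q => q % d = i.val), q / d

lemma gOp_eq_ofPts (j : ℕ) (x : Fin d → ℕ) :
    gOp d j x = ofPts d (shiftFrom d (j - 1) (sortedPts d x)).toFinset := by
  rw [shiftFrom, List.toFinset_append]
  rfl

lemma mod_pt (x : Fin d → ℕ) (i : Fin d) : (x i * d + i) % d = i := by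
  rw [Nat.mul_add_mod_self_right, Nat.mod_eq_of_lt i.isLt]

lemma injOn_mod_pts (x : Fin d → ℕ) : Set.InjOn (· % d) (pts d x) := by
  rintro _ hq _ hq' h
  simp only [pts, Finset.coe_image, Finset.coe_univ, Set.image_univ, Set.mem_range] at hq hq'
  obtain ⟨i, rfl⟩ := hq
  obtain ⟨i', rfl⟩ := hq'
  simp only [mod_pt] at h
  rw [Fin.ext h]

lemma card_pts (x : Fin d → ℕ) : (pts d x).card = d := by
  rw [pts, Finset.card_image_of_injective, Finset.card_univ, Fintype.card_fin]
  intro i i' h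
  exact Fin.ext (by simpa only [mod_pt] using congrArg (· % d) h)

lemma pts_ofPts {Q : Finset ℕ} (hQ : Q.card = d) (hinj : Set.InjOn (· % d) Q) :
    pts d (ofPts d Q) = Q := by
  refine (Finset.eq_of_subset_of_card_le (fun q hq => ?_) (by rw [card_pts, hQ])).symm
  have hd : 0 < d := hQ ▸ Finset.card_pos.mpr ⟨q, hq⟩
  have hfilter : Q.filter (fun q' => q' % d = q % d) = {q} := by
    ext q'
    simp only [Finset.mem_filter, Finset.mem_singleton]
    exact ⟨fun h => hinj h.1 hq h.2, by rintro rfl; exact ⟨hq, rfl⟩⟩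
  refine Finset.mem_image.mpr ⟨⟨q % d, Nat.mod_lt q hd⟩, Finset.mem_univ _, ?_⟩
  simp only [ofPts, hfilter, Finset.sum_singleton]
  exact Nat.div_add_mod' q d

lemma sortedPts_ofPts {L : List ℕ} (hL : L.Pairwise (· < ·)) (hres : (L.map (· % d)).Nodup)
    (hlen : L.length = d) : sortedPts d (ofPts d L.toFinset) = L := by
  have hnodup : L.Nodup := hres.of_map _
  rw [sortedPts, pts_ofPts (by rw [List.toFinset_card_of_nodup hnodup, hlen])
    fun a ha b hb => List.inj_on_of_nodup_map hres (List.mem_toFinset.mp ha)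
      (List.mem_toFinset.mp hb)]
  exact (List.toFinset_sort _ hnodup).mpr (hL.imp le_of_lt)

lemma pairwise_sortedPts (x : Fin d → ℕ) : (sortedPts d x).Pairwise (· < ·) :=
  (Finset.sortedLT_sort _).pairwise

lemma nodup_map_mod_sortedPts (x : Fin d → ℕ) : ((sortedPts d x).map (· % d)).Nodup :=
  (Finset.sort_nodup _ _).map_on fun _ ha _ hb =>
    injOn_mod_pts x ((Finset.mem_sort _).mp ha) ((Finset.mem_sort _).mp hb)

lemma length_sortedPts (x : Fin d → ℕ) : (sortedPts d x).length = d := by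
  rw [sortedPts, Finset.length_sort, card_pts]

lemma sortedPts_gOp (hd : 0 < d) (j : ℕ) (x : Fin d → ℕ) :
    sortedPts d (gOp d j x) = shiftFrom d (j - 1) (sortedPts d x) := by
  rw [gOp_eq_ofPts]
  exact sortedPts_ofPts (pairwise_shiftFrom hd (pairwise_sortedPts x))
    (nodup_map_mod_shiftFrom hd (nodup_map_mod_sortedPts x))
    (by rw [length_shiftFrom, length_sortedPts])

lemma gOp_gOp (hd : 0 < d) (j j' : ℕ) (x : Fin d → ℕ) :
    gOp d j' (gOp d j x) =
      ofPts d (shiftFrom d (j' - 1) (shiftFrom d (j - 1) (sortedPts d x))).toFinset := by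
  rw [gOp_eq_ofPts, sortedPts_gOp hd]

end Spiral

open Spiral in
theorem statement4_general (d : ℕ) (hd : 1 ≤ d) (j j' : ℕ) :
    gOp d j' ∘ gOp d j = gOp d j ∘ gOp d j' := by
  wlog hjj : j ≤ j' generalizing j j'
  · exact (this j' j (le_of_not_ge hjj)).symm
  funext x
  rw [Function.comp_apply, Function.comp_apply, gOp_gOp hd, gOp_gOp hd,
    shiftFrom_comm hd (Nat.sub_le_sub_right hjj 1)]

open Spiral in
/-- For all `j, j′ ∈ [d]`, the spiral shifting operators commute:
`g_{j′} ∘ g_j = g_j ∘ g_{j′}` as maps `ℕ^d → ℕ^d`. -/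
theorem statement4 (d : ℕ) (hd : 1 ≤ d) (j j' : ℕ) (hj1 : 1 ≤ j) (hjd : j ≤ d)
    (hj'1 : 1 ≤ j') (hj'd : j' ≤ d) :
    gOp d j' ∘ gOp d j = gOp d j ∘ gOp d j' :=
  statement4_general d hd j j'
end

section
/- Let 0 = (0,…,0) ∈ ℕ^d. The map ℕ^d → ℕ^d sending a = (a_1,…,a_d) to g^a(0) := g_1^{a_1} ∘ ⋯ ∘ g_d^{a_d}(0) is a bijection; that is, for every x ∈ ℕ^d there exists a unique a ∈ ℕ^d with g^a(0) = x. -/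
/-!
`g₁` moves every point one step up the spiral, so it is the rotation
`rot x = (x_d + 1, x_1, …, x_{d-1})`. When the lowest point of a configuration is `(1, 0)`,
`g_{j+1}` fixes it and acts on the other `d - 1` points exactly as `g_j` acts on `ℕ^{d-1}`,
transported by the order embedding `succSeat` of the `(d-1)`-spiral onto seats `2, …, d`.
Hence `g^a(0) = rot^{a₁} (0, g^{a'}(0))` with `a' = (a₂, …, a_d)`. Every `x` is `rot^m (0, y)`
for exactly one pair `(m, y)`: `rot` is injective and raises the lowest point of `x` by one
step, so `m` is the position of that point on the spiral. Induction on `d` concludes.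
-/

lemma List.toFinset_map {α β : Type*} [DecidableEq α] [DecidableEq β] (f : α → β)
    (l : List α) : (l.map f).toFinset = l.toFinset.image f := by
  ext; simp

namespace Spiral

section Readout

variable {d : ℕ}

lemma mem_pts {x : Fin d → ℕ} {q : ℕ} : q ∈ pts d x ↔ ∃ i : Fin d, x i * d + i = q := by
  simp [pts]

lemma pts_nonempty (x : Fin (d + 1) → ℕ) : (pts (d + 1) x).Nonempty :=
  ⟨_, mem_pts.2 ⟨0, rfl⟩⟩

lemma code_injective (x : Fin d → ℕ) : Function.Injective fun i : Fin d => x i * d + i := by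
  intro i j h
  have := congrArg (· % d) h
  simpa [Nat.mul_add_mod_of_lt i.isLt, Nat.mul_add_mod_of_lt j.isLt, Fin.val_inj] using this

def readout (d : ℕ) (Q : Finset ℕ) (i : Fin d) : ℕ := ∑ q ∈ Q.filter (· % d = i), q / d

noncomputable def shiftedPts (d j : ℕ) (x : Fin d → ℕ) : Finset ℕ :=
  let L := sortedPts d x
  let S : Finset ℕ := (L.drop (j - 1)).toFinset.image (· % d)
  (L.take (j - 1)).toFinset ∪ ((L.drop (j - 1)).map (nextPt d S)).toFinset

lemma gOp_eq_readout (d j : ℕ) (x : Fin d → ℕ) : gOp d j x = readout d (shiftedPts d j x) :=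
  rfl

lemma readout_pts (x : Fin d → ℕ) : readout d (pts d x) = x := by
  funext i
  have hd : 0 < d := i.pos
  have hseat : Finset.univ.filter (fun k : Fin d => (x k * d + k) % d = i) = {i} := by
    ext k
    simp [Nat.mod_eq_of_lt k.isLt, Fin.val_inj]
  rw [readout, pts, Finset.filter_image, Finset.sum_image fun a _ b _ h => code_injective x h,
    hseat, Finset.sum_singleton, Nat.add_comm, Nat.add_mul_div_right _ _ hd,
    Nat.div_eq_of_lt i.isLt, Nat.zero_add]

end Readout

section Rotation

variable {d : ℕ}

def rot (x : Fin (d + 1) → ℕ) : Fin (d + 1) → ℕ :=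
  Fin.cons (x (Fin.last d) + 1) (Fin.init x)

def unrot (x : Fin (d + 1) → ℕ) : Fin (d + 1) → ℕ := Fin.snoc (Fin.tail x) (x 0 - 1)

lemma unrot_rot (x : Fin (d + 1) → ℕ) : unrot (rot x) = x := by
  simp [rot, unrot]

lemma rot_unrot {x : Fin (d + 1) → ℕ} (hx : x 0 ≠ 0) : rot (unrot x) = x := by
  simp [rot, unrot, Nat.sub_add_cancel (Nat.one_le_iff_ne_zero.2 hx)]

lemma rot_injective : Function.Injective (rot (d := d)) :=
  Function.LeftInverse.injective unrot_rot

lemma pts_rot (x : Fin (d + 1) → ℕ) :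
    pts (d + 1) (rot x) = (pts (d + 1) x).image (· + 1) := by
  ext q
  simp only [mem_pts, Finset.mem_image, exists_exists_eq_and]
  constructor
  · rintro ⟨i, rfl⟩
    induction i using Fin.cases with
    | zero => exact ⟨Fin.last d, by simp [rot]; ring⟩
    | succ i => exact ⟨i.castSucc, by simp [rot, Fin.init]; ring⟩
  · rintro ⟨i, rfl⟩
    induction i using Fin.lastCases with
    | last => exact ⟨0, by simp [rot]; ring⟩
    | cast i => exact ⟨i.succ, by simp [rot, Fin.init]; ring⟩

lemma nextPt_range (hd : 0 < d) : nextPt d (Finset.range d) = (· + 1) := by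
  funext p
  have hmem : p + 1 ∈ {q | p < q ∧ q % d ∈ Finset.range d} :=
    ⟨p.lt_succ_self, Finset.mem_range.2 (Nat.mod_lt _ hd)⟩
  exact le_antisymm (Nat.sInf_le hmem) (Nat.sInf_mem ⟨_, hmem⟩).1

lemma pts_image_mod (x : Fin d → ℕ) : (pts d x).image (· % d) = Finset.range d := by
  ext r
  simp only [Finset.mem_image, Finset.mem_range, mem_pts, exists_exists_eq_and]
  constructor
  · rintro ⟨i, rfl⟩
    rw [Nat.mul_add_mod_of_lt i.isLt]
    exact i.isLt
  · exact fun hr => ⟨⟨r, hr⟩, Nat.mul_add_mod_of_lt hr⟩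

lemma shiftedPts_one (x : Fin (d + 1) → ℕ) :
    shiftedPts (d + 1) 1 x = (pts (d + 1) x).image (· + 1) := by
  simp only [shiftedPts, Nat.sub_self, List.take_zero, List.drop_zero, List.toFinset_nil,
    Finset.empty_union, sortedPts, Finset.sort_toFinset, pts_image_mod,
    List.toFinset_map, nextPt_range d.succ_pos]

lemma gOp_one (x : Fin (d + 1) → ℕ) : gOp (d + 1) 1 x = rot x := by
  rw [gOp_eq_readout, shiftedPts_one, ← pts_rot, readout_pts]

end Rotation

section SuccSeat

variable {n : ℕ}

/-- The point `(i, m)` of the `n`-spiral, moved to seat `i + 1` of the `(n + 1)`-spiral. -/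
def succSeat (n q : ℕ) : ℕ := q + q / n + 1

lemma succSeat_mul_add (a : ℕ) {b : ℕ} (hb : b < n) :
    succSeat n (a * n + b) = a * (n + 1) + (b + 1) := by
  rw [succSeat, Nat.add_comm (a * n) b, Nat.add_mul_div_right _ _ (b.zero_le.trans_lt hb),
    Nat.div_eq_of_lt hb]
  ring

lemma succSeat_strictMono (n : ℕ) : StrictMono (succSeat n) := by
  intro q q' h
  have := Nat.div_le_div_right (c := n) h.le
  unfold succSeat
  omega

lemma succSeat_eq (hn : 0 < n) (q : ℕ) : succSeat n q = q / n * (n + 1) + (q % n + 1) := by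
  conv_lhs => rw [← Nat.div_add_mod' q n]
  exact succSeat_mul_add _ (Nat.mod_lt _ hn)

lemma succSeat_mod (hn : 0 < n) (q : ℕ) : succSeat n q % (n + 1) = q % n + 1 := by
  rw [succSeat_eq hn, Nat.mul_add_mod_of_lt (Nat.succ_lt_succ (Nat.mod_lt _ hn))]

lemma succSeat_div (hn : 0 < n) (q : ℕ) : succSeat n q / (n + 1) = q / n := by
  rw [succSeat_eq hn, Nat.add_comm, Nat.add_mul_div_right _ _ n.succ_pos,
    Nat.div_eq_of_lt (Nat.succ_lt_succ (Nat.mod_lt _ hn)), Nat.zero_add]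

lemma exists_succSeat_eq {r : ℕ} (hr : r % (n + 1) ≠ 0) : ∃ q, succSeat n q = r := by
  have hlt : r % (n + 1) - 1 < n := by have := Nat.mod_lt r (Nat.add_one_pos n); omega
  refine ⟨r / (n + 1) * n + (r % (n + 1) - 1), ?_⟩
  rw [succSeat_mul_add _ hlt, Nat.sub_add_cancel (Nat.one_le_iff_ne_zero.2 hr)]
  exact Nat.div_add_mod' r (n + 1)

lemma pts_cons_zero (y : Fin n → ℕ) :
    pts (n + 1) (Fin.cons 0 y) = insert 0 ((pts n y).image (succSeat n)) := by
  ext q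
  simp only [mem_pts, Finset.mem_insert, Finset.mem_image, exists_exists_eq_and,
    Fin.exists_fin_succ, Fin.cons_zero, Fin.cons_succ, Fin.val_zero, Fin.val_succ,
    succSeat_mul_add _ (Fin.isLt _)]
  grind

lemma sortedPts_cons_zero (y : Fin n → ℕ) :
    sortedPts (n + 1) (Fin.cons 0 y) = 0 :: (sortedPts n y).map (succSeat n) := by
  let f : ℕ ↪ ℕ := ⟨succSeat n, (succSeat_strictMono n).injective⟩
  have hzero : (0 : ℕ) ∉ (pts n y).map f := by simp [f, succSeat]
  have himage : (pts n y).image (succSeat n) = (pts n y).map f := (Finset.map_eq_image f _).symm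
  rw [sortedPts, pts_cons_zero, himage,
    Finset.sort_insert _ (fun b _ => b.zero_le) hzero]
  exact congrArg (0 :: ·)
    (Finset.map_sort f _ _ _ fun _ _ _ _ => (succSeat_strictMono n).le_iff_le.symm).symm

end SuccSeat

section Lift

variable {n : ℕ}

lemma setOf_succSeat_lt (hn : 0 < n) (S : Finset ℕ) (p : ℕ) :
    {r | succSeat n p < r ∧ r % (n + 1) ∈ S.image (· + 1)}
      = succSeat n '' {q | p < q ∧ q % n ∈ S} := by
  ext r
  simp only [Set.mem_ofPred_eq, Set.mem_image, Finset.mem_image]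
  constructor
  · rintro ⟨hlt, s, hs, hsr⟩
    obtain ⟨q, rfl⟩ := exists_succSeat_eq (n := n) (r := r) (by omega)
    rw [succSeat_mod hn, Nat.add_right_cancel_iff] at hsr
    exact ⟨q, ⟨(succSeat_strictMono n).lt_iff_lt.1 hlt, hsr ▸ hs⟩, rfl⟩
  · rintro ⟨q, ⟨hlt, hq⟩, rfl⟩
    exact ⟨succSeat_strictMono n hlt, q % n, hq, (succSeat_mod hn q).symm⟩

lemma nextPt_succSeat (hn : 0 < n) {S : Finset ℕ} (hS : ∃ s ∈ S, s < n) (p : ℕ) :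
    nextPt (n + 1) (S.image (· + 1)) (succSeat n p) = succSeat n (nextPt n S p) := by
  obtain ⟨s, hs, hsn⟩ := hS
  have hne : {q | p < q ∧ q % n ∈ S}.Nonempty :=
    ⟨(p + 1) * n + s, by nlinarith, by rwa [Nat.mul_add_mod_of_lt hsn]⟩
  rw [nextPt, setOf_succSeat_lt hn]
  exact ((succSeat_strictMono n).monotone.map_isLeast (isLeast_csInf hne)).csInf_eq

lemma shiftedPts_cons_zero {j : ℕ} (hj : j < n) (y : Fin n → ℕ) :
    shiftedPts (n + 1) (j + 2) (Fin.cons 0 y)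
      = insert 0 ((shiftedPts n (j + 1) y).image (succSeat n)) := by
  have hn : 0 < n := j.zero_le.trans_lt hj
  set high := (sortedPts n y).drop j
  have hhigh : ∃ s ∈ high.toFinset.image (· % n), s < n := by
    obtain ⟨q, hq⟩ := List.exists_mem_of_ne_nil high (by
      rw [← List.length_pos_iff, List.length_drop, sortedPts, Finset.length_sort, pts,
        Finset.card_image_of_injective _ (code_injective y), Finset.card_univ, Fintype.card_fin]
      omega)
    exact ⟨q % n, Finset.mem_image.2 ⟨q, List.mem_toFinset.2 hq, rfl⟩, Nat.mod_lt _ hn⟩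
  have hseats : ((high.map (succSeat n)).toFinset.image (· % (n + 1)))
      = (high.toFinset.image (· % n)).image (· + 1) := by
    simp only [List.toFinset_map, Finset.image_image]
    exact Finset.image_congr fun q _ => succSeat_mod hn q
  simp only [shiftedPts, sortedPts_cons_zero, show j + 2 - 1 = j + 1 from rfl,
    Nat.add_sub_cancel, List.take_succ_cons, List.drop_succ_cons, ← List.map_drop,
    ← List.map_take]
  rw [hseats, List.map_map, show nextPt (n + 1) _ ∘ succSeat n = succSeat n ∘ nextPt n _ from
    funext (nextPt_succSeat hn hhigh)]
  simp only [← List.map_map, List.toFinset_map, List.toFinset_cons, Finset.image_union,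
    Finset.insert_union]
  rfl

lemma readout_insert_zero_image (hn : 0 < n) (Q : Finset ℕ) :
    readout (n + 1) (insert 0 (Q.image (succSeat n))) = Fin.cons 0 (readout n Q) := by
  funext i
  induction i using Fin.cases with
  | zero =>
    have hempty : (Q.image (succSeat n)).filter (· % (n + 1) = 0) = ∅ := by
      simp [Finset.filter_eq_empty_iff, succSeat_mod hn]
    rw [readout, Finset.filter_insert, Fin.val_zero, if_pos (Nat.zero_mod _), hempty]
    simp
  | succ i =>
    have hseat : Q.filter (fun q => succSeat n q % (n + 1) = i.succ) = Q.filter (· % n = i) := by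
      simp [succSeat_mod hn]
    rw [readout, Finset.filter_insert, if_neg (by simp), Finset.filter_image,
      Finset.sum_image fun _ _ _ _ h => (succSeat_strictMono n).injective h, hseat]
    simp [readout, succSeat_div hn]

lemma gOp_cons_zero {j : ℕ} (hj : j < n) (y : Fin n → ℕ) :
    gOp (n + 1) (j + 2) (Fin.cons 0 y) = Fin.cons 0 (gOp n (j + 1) y) := by
  rw [gOp_eq_readout, shiftedPts_cons_zero hj, readout_insert_zero_image (j.zero_le.trans_lt hj),
    gOp_eq_readout]

end Lift

section Decomposition

variable {n : ℕ}

lemma foldr_gOp_cons_zero (a : Fin (n + 1) → ℕ) (l : List (Fin n)) (z : Fin n → ℕ) :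
    l.foldr (fun j y => (gOp (n + 1) (j.succ.val + 1))^[a j.succ] y) (Fin.cons 0 z)
      = Fin.cons 0 (l.foldr (fun j y => (gOp n (j.val + 1))^[Fin.tail a j] y) z) := by
  induction l with
  | nil => rfl
  | cons j l ih =>
    have hsemiconj : Function.Semiconj (fun y : Fin n → ℕ => (Fin.cons 0 y : Fin (n + 1) → ℕ))
        (gOp n (j.val + 1)) (gOp (n + 1) (j.val + 2)) := fun y => (gOp_cons_zero j.isLt y).symm
    rw [List.foldr_cons, List.foldr_cons, ih]
    exact (hsemiconj.iterate_right _ _).symm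

lemma gIter_succ (a : Fin (n + 1) → ℕ) :
    gIter (n + 1) a (fun _ => 0)
      = rot^[a 0] (Fin.cons 0 (gIter n (Fin.tail a) (fun _ => 0))) := by
  have hzero : (fun _ => 0 : Fin (n + 1) → ℕ) = Fin.cons 0 (fun _ => 0) := by
    funext i
    induction i using Fin.cases <;> rfl
  rw [gIter, List.finRange_succ, List.foldr_cons, List.foldr_map, hzero, foldr_gOp_cons_zero,
    ← funext gOp_one]
  rfl

end Decomposition

section Lowest

variable {d : ℕ}

noncomputable def lowest (x : Fin (d + 1) → ℕ) : ℕ := (pts (d + 1) x).min' (pts_nonempty x)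

lemma lowest_rot (x : Fin (d + 1) → ℕ) : lowest (rot x) = lowest x + 1 := by
  simp only [lowest, pts_rot]
  exact Finset.min'_image (fun _ _ h => Nat.add_le_add_right h 1) _ _

lemma lowest_iterate_rot (m : ℕ) (x : Fin (d + 1) → ℕ) :
    lowest (rot^[m] x) = lowest x + m := by
  induction m with
  | zero => rfl
  | succ m ih => rw [Function.iterate_succ_apply', lowest_rot, ih, Nat.add_assoc]

lemma lowest_eq_zero_iff {x : Fin (d + 1) → ℕ} : lowest x = 0 ↔ x 0 = 0 := by
  constructor
  · intro h
    have hmem : lowest x ∈ pts (d + 1) x := Finset.min'_mem _ _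
    obtain ⟨i, hi⟩ := mem_pts.1 (h ▸ hmem)
    obtain rfl : i = 0 := Fin.ext (by rw [Fin.val_zero]; omega)
    simpa using hi
  · intro h
    exact Nat.eq_zero_of_le_zero (Finset.min'_le _ _ (mem_pts.2 ⟨0, by simp [h]⟩))

lemma exists_iterate_rot_cons_zero (x : Fin (d + 1) → ℕ) :
    ∃ y, rot^[lowest x] (Fin.cons 0 y) = x := by
  induction h : lowest x generalizing x with
  | zero =>
    refine ⟨Fin.tail x, ?_⟩
    rw [Function.iterate_zero_apply, ← lowest_eq_zero_iff.1 h, Fin.cons_self_tail]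
  | succ k ih =>
    have hx : x 0 ≠ 0 := fun h0 => by simp [lowest_eq_zero_iff.2 h0] at h
    obtain ⟨y, hy⟩ := ih (unrot x) (by
      rw [← Nat.add_right_cancel_iff, ← lowest_rot, rot_unrot hx, h])
    exact ⟨y, by rw [Function.iterate_succ_apply', hy, rot_unrot hx]⟩

lemma iterate_rot_cons_zero_bijective :
    Function.Bijective fun p : ℕ × (Fin d → ℕ) => rot^[p.1] (Fin.cons 0 p.2) := by
  refine ⟨fun ⟨m, y⟩ ⟨m', y'⟩ h => ?_, fun x => ?_⟩
  · have hm : m = m' := by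
      simpa [lowest_iterate_rot, lowest_eq_zero_iff.2 (Fin.cons_zero _ _)] using congrArg lowest h
    subst hm
    exact Prod.ext rfl (Fin.cons_right_injective _ ((rot_injective.iterate m) h))
  · obtain ⟨y, hy⟩ := exists_iterate_rot_cons_zero x
    exact ⟨(lowest x, y), hy⟩

end Lowest

end Spiral

open Spiral in
theorem statement5_general (d : ℕ) :
    Function.Bijective (fun a : Fin d → ℕ => gIter d a (fun _ => 0)) := by
  induction d with
  | zero => exact Function.bijective_of_subsingleton _
  | succ n ih =>
    have hsplit : (fun a : Fin (n + 1) → ℕ => gIter (n + 1) a (fun _ => 0))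
        = (fun p : ℕ × (Fin n → ℕ) => rot^[p.1] (Fin.cons 0 p.2))
          ∘ Prod.map id (fun a => gIter n a (fun _ => 0)) ∘ (Fin.consEquiv _).symm :=
      funext gIter_succ
    rw [hsplit]
    exact iterate_rot_cons_zero_bijective.comp
      ((Function.bijective_id.prodMap ih).comp (Equiv.bijective _))

open Spiral in
/-- The map `ℕ^d → ℕ^d` sending `a = (a₁,…,a_d)` to
`g^a(0) := g₁^{a₁} ∘ ⋯ ∘ g_d^{a_d}(0,…,0)` is a bijection: for every `x ∈ ℕ^d` there is a
unique `a ∈ ℕ^d` with `g^a(0) = x`. -/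
theorem statement5 (d : ℕ) (hd : 1 ≤ d) :
    Function.Bijective (fun a : Fin d → ℕ => gIter d a (fun _ => 0)) :=
  statement5_general d
end

section
/- The map g_1 : ℕ^d → ℕ^d, g_1(n_1,…,n_d) = (n_d + 1, n_1,…,n_{d−1}), is injective, its image is exactly the set {x ∈ ℕ^d : x_1 ≥ 1} (the complement of {x : x_1 = 0}), and for every x ∈ ℕ^d it satisfies n(g_1(x)) = n(x) + 1 and W(g_1(x)) = W(x). -/
namespace Spiral

/-- The map `g₁ : ℕ^d → ℕ^d`, `g₁(n₁,…,n_d) = (n_d + 1, n₁, …, n_{d−1})` (indices of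
`Fin d` are cyclic: `0 - 1 = d - 1`). -/
def gOne (d : ℕ) [NeZero d] (x : Fin d → ℕ) : Fin d → ℕ :=
  fun i => if i = 0 then x (i - 1) + 1 else x (i - 1)

end Spiral

namespace Spiral

lemma succ_sub_one' (m : ℕ) (i : Fin m) : (i.succ : Fin (m+1)) - 1 = i.castSucc := by
  have hm : 1 ≤ m := i.pos
  ext
  simp only [Fin.sub_def, Fin.val_succ, Fin.val_one', Fin.coe_castSucc]
  rw [Nat.mod_eq_of_lt (by omega : 1 < m+1)]
  rw [show m+1 - 1 + ((i:ℕ)+1) = (m+1) + i by omega, Nat.add_mod_left,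
    Nat.mod_eq_of_lt (by omega)]

lemma zero_sub_one' (m : ℕ) : (0 : Fin (m+1)) - 1 = Fin.last m := by
  match m with
  | 0 => rfl
  | m+1 =>
    ext
    simp only [Fin.sub_def, Fin.val_zero, Fin.val_one', Fin.val_last]
    rw [Nat.mod_eq_of_lt (by omega : 1 < m+1+1), Nat.mod_eq_of_lt (by omega)]
    omega

lemma gOne_eq_cons (m : ℕ) (x : Fin (m+1) → ℕ) :
    gOne (m+1) x = Fin.cons (x (Fin.last m) + 1) (fun i => x i.castSucc) := by
  funext i
  induction i using Fin.cases with
  | zero =>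
    rw [Fin.cons_zero]
    show (if (0:Fin (m+1)) = 0 then x (0 - 1) + 1 else x (0 - 1)) = x (Fin.last m) + 1
    rw [if_pos rfl, zero_sub_one']
  | succ i => simp [gOne, succ_sub_one', Fin.succ_ne_zero]

lemma weight_cons (m : ℕ) (a : ℕ) (y : Fin m → ℕ) :
    weight (Fin.cons a y : Fin (m+1) → ℕ) =
      (∑ j : Fin m, ((y j - a) + (a - y j - 1))) + weight y := by
  rw [weight, Fin.sum_univ_succ]
  congr 1
  · rw [Fin.sum_univ_succ]
    simp [Fin.succ_pos]
  · rw [weight]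
    refine Finset.sum_congr rfl fun i _ => ?_
    rw [Fin.sum_univ_succ]
    simp [Fin.succ_lt_succ_iff, (Fin.succ_pos i).not_gt]

lemma weight_snoc (m : ℕ) (y : Fin m → ℕ) (b : ℕ) :
    weight (Fin.snoc y b : Fin (m+1) → ℕ) =
      weight y + ∑ i : Fin m, ((b - y i) + (y i - b - 1)) := by
  rw [weight, Fin.sum_univ_castSucc]
  have hlast : ∀ j : Fin (m+1), ¬ (Fin.last m < j) := fun j => (Fin.le_last j).not_gt
  rw [Finset.sum_eq_zero (fun j _ => if_neg (hlast j)), add_zero]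
  rw [weight, ← Finset.sum_add_distrib]
  refine Finset.sum_congr rfl fun i _ => ?_
  rw [Fin.sum_univ_castSucc]
  simp [Fin.castSucc_lt_castSucc_iff, Fin.castSucc_lt_last]

end Spiral

open Spiral in
/-- The map `g₁ : ℕ^d → ℕ^d`, `g₁(n₁,…,n_d) = (n_d + 1, n₁,…,n_{d−1})`, is
injective, its image is exactly `{x ∈ ℕ^d : x₁ ≥ 1}`, and for every `x ∈ ℕ^d` it satisfies
`n(g₁(x)) = n(x) + 1` and `W(g₁(x)) = W(x)`. -/
theorem statement13 (d : ℕ) [NeZero d] :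
    Function.Injective (gOne d) ∧
    Set.range (gOne d) = {x : Fin d → ℕ | 1 ≤ x 0} ∧
    (∀ x : Fin d → ℕ, size (gOne d x) = size x + 1) ∧
    (∀ x : Fin d → ℕ, weight (gOne d x) = weight x) := by
  obtain ⟨m, rfl⟩ : ∃ m, d = m + 1 := Nat.exists_eq_succ_of_ne_zero (NeZero.ne d)
  refine ⟨?_, ?_, ?_, ?_⟩
  · -- injectivity
    intro x y h
    have key : ∀ i : Fin (m+1), x (i - 1) = y (i - 1) := by
      intro i
      have := congrFun h i
      by_cases hi : i = 0 <;> simpa [gOne, hi] using this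
    funext k
    have := key (k + 1)
    rwa [add_sub_cancel_right] at this
  · -- range
    ext x
    simp only [Set.mem_range, Set.mem_setOf_eq]
    constructor
    · rintro ⟨y, rfl⟩
      simp [gOne]
    · intro hx
      refine ⟨fun i => if i = Fin.last m then x 0 - 1 else x (i + 1), funext fun i => ?_⟩
      by_cases hi : i = 0
      · subst hi
        show (if (0:Fin (m+1)) = 0 then _ + 1 else _) = x 0
        rw [if_pos rfl, zero_sub_one']
        simp only [if_pos rfl, if_true, eq_self_iff_true]
        omega
      · have h1 : i - 1 ≠ Fin.last m := by
          intro h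
          apply hi
          have : i - 1 + 1 = Fin.last m + 1 := by rw [h]
          rwa [sub_add_cancel, Fin.last_add_one] at this
        simp only [gOne, if_neg hi, if_neg h1, sub_add_cancel]
  · -- size
    intro x
    rw [gOne_eq_cons, size, Fin.sum_univ_succ, Fin.cons_zero]
    simp only [Fin.cons_succ]
    rw [size]
    conv_rhs => rw [Fin.sum_univ_castSucc]
    ring
  · -- weight
    intro x
    rw [gOne_eq_cons, weight_cons]
    conv_rhs =>
      rw [show x = (Fin.snoc (fun i => x i.castSucc) (x (Fin.last m)) : Fin (m+1) → ℕ) by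
        funext i; induction i using Fin.lastCases <;> simp]
    rw [weight_snoc, add_comm]
    congr 1
    refine Finset.sum_congr rfl fun j _ => ?_
    omega
end
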